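/- arXiv:2308.10507 — 7 statements merged into one kernel-verified Lean document; each statement's English description precedes it below -/
import Mathlib

section
/- Let K ≥ 1, let u, v ∈ ℝ³ be linearly independent, set φ = (1/2)(u − iv) ∈ ℂ³ and h = φ·φ, and assume the K-quasiconformality inequality ‖φ‖² ≤ ((K²+1)/(2K))·√(‖φ‖⁴ − |h|²). Let 𝔫 = (u × v)/‖u × v‖ and let b ∈ ℝ³ with ‖b‖ = 1. Then ((K²+1)/(2K²))·|φ·b|²/‖φ‖² ≤ (1 − (𝔫·b)²)/2 ≤ ((K²+1)/2)·|φ·b|²/‖φ‖², where φ·b = Σᵢ φᵢbᵢ ∈ ℂ. -/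
/-- Hermitian square norm on `ℂ³`: `‖a‖² = Σᵢ |aᵢ|²`. -/
noncomputable def hnorm2 (a : Fin 3 → ℂ) : ℝ := ∑ i, ‖a i‖ ^ 2

/-- The `ℂ`-bilinear dot product on `ℂ³`: `a·b = Σᵢ aᵢbᵢ`. -/
noncomputable def cdot (a b : Fin 3 → ℂ) : ℂ := ∑ i, a i * b i

/-- The cross product on `ℝ³`. -/
def rcross (a b : Fin 3 → ℝ) : Fin 3 → ℝ :=
  ![a 1 * b 2 - a 2 * b 1, a 2 * b 0 - a 0 * b 2, a 0 * b 1 - a 1 * b 0]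

/-- Real square norm on `ℝ³`. -/
noncomputable def rnorm2 (a : Fin 3 → ℝ) : ℝ := ∑ i, a i ^ 2

/-- Real dot product on `ℝ³`. -/
noncomputable def rdot (a b : Fin 3 → ℝ) : ℝ := ∑ i, a i * b i


lemma sq_sum_pos3 (a : Fin 3 → ℝ) (ha : a ≠ 0) :
    0 < a 0 ^ 2 + a 1 ^ 2 + a 2 ^ 2 := by
  by_contra hle
  push_neg at hle
  have h0 := sq_nonneg (a 0); have h1 := sq_nonneg (a 1); have h2 := sq_nonneg (a 2)
  apply ha
  funext i
  have e0 : a 0 = 0 := by nlinarith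
  have e1 : a 1 = 0 := by nlinarith
  have e2 : a 2 = 0 := by nlinarith
  fin_cases i
  · exact e0
  · exact e1
  · exact e2

lemma quad_nonneg (a b F p q : ℝ) (hab : 0 ≤ a + b) (hF : F ^ 2 ≤ a * b) :
    0 ≤ a * p ^ 2 - 2 * F * (p * q) + b * q ^ 2 := by
  have ha : 0 ≤ a := by nlinarith [sq_nonneg F]
  have hb : 0 ≤ b := by nlinarith [sq_nonneg F]
  rcases eq_or_lt_of_le ha with h0 | hpos
  · have hF0 : F = 0 := by nlinarith [sq_nonneg F]
    rw [hF0, ← h0]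
    nlinarith [sq_nonneg q]
  · nlinarith [sq_nonneg (a * p - F * q),
      mul_nonneg (sub_nonneg.2 hF) (sq_nonneg q)]

lemma key_lower (K E G F p q w : ℝ) (hK : 1 ≤ K) (hE : 0 ≤ E) (hG : 0 ≤ G)
    (hw : 0 ≤ w) (hw2 : w ^ 2 = E * G - F ^ 2) (hWpos : 0 < E * G - F ^ 2)
    (hS : K * (E + G) ≤ (K ^ 2 + 1) * w) :
    (K ^ 2 + 1) * (E * G - F ^ 2) * (p ^ 2 + q ^ 2)
      ≤ K ^ 2 * ((E + G) * (p ^ 2 * G + q ^ 2 * E - 2 * (p * q) * F)) := by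
  have hK0 : (0 : ℝ) < K := lt_of_lt_of_le one_pos hK
  have hK21 : (1 : ℝ) ≤ K ^ 2 := by nlinarith
  have hKS2 : K ^ 2 * (E + G) ^ 2 ≤ (K ^ 2 + 1) ^ 2 * (E * G - F ^ 2) := by
    have h1 : 0 ≤ ((K ^ 2 + 1) * w - K * (E + G)) * ((K ^ 2 + 1) * w + K * (E + G)) := by
      apply mul_nonneg (sub_nonneg.2 hS)
      have : 0 ≤ K * (E + G) := by positivity
      positivity
    nlinarith [h1, hw2]
  have hS2 : 4 * (E * G - F ^ 2) ≤ (E + G) ^ 2 := by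
    nlinarith [sq_nonneg (E - G), sq_nonneg F]
  have hq := quad_nonneg (K ^ 2 * (E + G) * G - (K ^ 2 + 1) * (E * G - F ^ 2))
    (K ^ 2 * (E + G) * E - (K ^ 2 + 1) * (E * G - F ^ 2))
    (K ^ 2 * (E + G) * F) p q ?_ ?_
  · linarith [hq]
  · nlinarith [mul_le_mul_of_nonneg_left hS2 (by positivity : (0:ℝ) ≤ K ^ 2),
      mul_nonneg (sub_nonneg.2 hK21) hWpos.le]
  · nlinarith [mul_nonneg hWpos.le (sub_nonneg.2 hKS2)]

lemma key_upper (K E G F p q w : ℝ) (hK : 1 ≤ K) (hE : 0 ≤ E) (hG : 0 ≤ G)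
    (hw : 0 ≤ w) (hw2 : w ^ 2 = E * G - F ^ 2) (hWpos : 0 < E * G - F ^ 2)
    (hS : K * (E + G) ≤ (K ^ 2 + 1) * w) :
    (E + G) * (p ^ 2 * G + q ^ 2 * E - 2 * (p * q) * F)
      ≤ (K ^ 2 + 1) * (E * G - F ^ 2) * (p ^ 2 + q ^ 2) := by
  have hK0 : (0 : ℝ) < K := lt_of_lt_of_le one_pos hK
  have hK21 : (1 : ℝ) ≤ K ^ 2 := by nlinarith
  have hKS2 : K ^ 2 * (E + G) ^ 2 ≤ (K ^ 2 + 1) ^ 2 * (E * G - F ^ 2) := by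
    have h1 : 0 ≤ ((K ^ 2 + 1) * w - K * (E + G)) * ((K ^ 2 + 1) * w + K * (E + G)) := by
      apply mul_nonneg (sub_nonneg.2 hS)
      have : 0 ≤ K * (E + G) := by positivity
      positivity
    nlinarith [h1, hw2]
  have hq := quad_nonneg ((K ^ 2 + 1) * (E * G - F ^ 2) - (E + G) * G)
    ((K ^ 2 + 1) * (E * G - F ^ 2) - (E + G) * E)
    (-((E + G) * F)) p q ?_ ?_
  · linarith [hq]
  · nlinarith [hKS2, mul_nonneg (mul_nonneg (by positivity : (0:ℝ) ≤ K ^ 2 + 1) hWpos.le)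
      (sub_nonneg.2 hK21), sq_nonneg K]
  · nlinarith [mul_nonneg hWpos.le (sub_nonneg.2 hKS2)]

/-- For a `K`-quasiconformal configuration (`K ≥ 1`, `u, v` linearly independent,
`φ = (1/2)(u − iv)`, `‖φ‖² ≤ ((K²+1)/(2K))√(‖φ‖⁴ − |h|²)`), with unit normal
`𝔫 = (u × v)/‖u × v‖` and any unit vector `b ∈ ℝ³`:
`((K²+1)/(2K²))·|φ·b|²/‖φ‖² ≤ (1 − (𝔫·b)²)/2 ≤ ((K²+1)/2)·|φ·b|²/‖φ‖²`. -/
theorem gauss_map_angle_estimate (K : ℝ) (hK : 1 ≤ K)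
    (u v : Fin 3 → ℝ) (hind : LinearIndependent ℝ ![u, v])
    (φ : Fin 3 → ℂ)
    (hφ : ∀ i, φ i = (1 / 2 : ℂ) * ((u i : ℂ) - Complex.I * (v i : ℂ)))
    (h : ℂ) (hh : h = cdot φ φ)
    (hQC : hnorm2 φ
        ≤ ((K ^ 2 + 1) / (2 * K)) *
            Real.sqrt ((hnorm2 φ) ^ 2 - ‖h‖ ^ 2))
    (𝔫 : Fin 3 → ℝ)
    (h𝔫 : ∀ i, 𝔫 i = rcross u v i / Real.sqrt (rnorm2 (rcross u v)))
    (b : Fin 3 → ℝ) (hb : Real.sqrt (rnorm2 b) = 1) :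
    ((K ^ 2 + 1) / (2 * K ^ 2)) *
        ‖cdot φ (fun i => (b i : ℂ))‖ ^ 2 / hnorm2 φ
      ≤ (1 - (rdot 𝔫 b) ^ 2) / 2 ∧
    (1 - (rdot 𝔫 b) ^ 2) / 2
      ≤ ((K ^ 2 + 1) / 2) *
          ‖cdot φ (fun i => (b i : ℂ))‖ ^ 2 / hnorm2 φ := by
  have hK0 : (0 : ℝ) < K := lt_of_lt_of_le one_pos hK
  obtain ⟨E, hE⟩ : ∃ x : ℝ, x = u 0 ^ 2 + u 1 ^ 2 + u 2 ^ 2 := ⟨_, rfl⟩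
  obtain ⟨G, hG⟩ : ∃ x : ℝ, x = v 0 ^ 2 + v 1 ^ 2 + v 2 ^ 2 := ⟨_, rfl⟩
  obtain ⟨F, hF⟩ : ∃ x : ℝ, x = u 0 * v 0 + u 1 * v 1 + u 2 * v 2 := ⟨_, rfl⟩
  obtain ⟨p, hp⟩ : ∃ x : ℝ, x = u 0 * b 0 + u 1 * b 1 + u 2 * b 2 := ⟨_, rfl⟩
  obtain ⟨q, hq⟩ : ∃ x : ℝ, x = v 0 * b 0 + v 1 * b 1 + v 2 * b 2 := ⟨_, rfl⟩
  -- positivity of E, G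
  have hu : u ≠ 0 := by simpa using hind.ne_zero 0
  have hEpos : 0 < E := hE ▸ sq_sum_pos3 u hu
  have hGnn : 0 ≤ G := by rw [hG]; positivity
  -- W > 0 (strict Cauchy–Schwarz from linear independence)
  have hWpos : 0 < E * G - F ^ 2 := by
    have hvec : (fun i => E * v i - F * u i) ≠ 0 := by
      intro hcontra
      have hcomb : (-F) • u + E • v = 0 := by
        funext i
        have := congrFun hcontra i
        simp only [Pi.add_apply, Pi.smul_apply, smul_eq_mul, Pi.zero_apply] at this ⊢
        linarith
      obtain ⟨-, hE0⟩ := LinearIndependent.pair_iff.mp hind (-F) E hcomb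
      exact absurd hE0 (ne_of_gt hEpos)
    have hpos := sq_sum_pos3 _ hvec
    have hsum : (E * v 0 - F * u 0) ^ 2 + (E * v 1 - F * u 1) ^ 2
        + (E * v 2 - F * u 2) ^ 2 = E * (E * G - F ^ 2) := by
      rw [hE, hG, hF]; ring
    rw [hsum] at hpos
    by_contra hc
    push_neg at hc
    nlinarith
  -- w = sqrt W
  obtain ⟨w, hwdef⟩ : ∃ x : ℝ, x = Real.sqrt (E * G - F ^ 2) := ⟨_, rfl⟩
  have hwpos : 0 < w := hwdef ▸ Real.sqrt_pos.mpr hWpos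
  have hw2 : w ^ 2 = E * G - F ^ 2 := by rw [hwdef]; exact Real.sq_sqrt hWpos.le
  -- hnorm2 φ
  have habsφ : ∀ i, ‖φ i‖ ^ 2 = (u i ^ 2 + v i ^ 2) / 4 := by
    intro i
    rw [hφ, Complex.sq_norm]
    simp [Complex.normSq_apply, Complex.mul_re, Complex.mul_im]
    ring
  have hn2 : hnorm2 φ = (E + G) / 4 := by
    simp only [hnorm2, Fin.sum_univ_three, habsφ]
    rw [hE, hG]; ring
  -- |h|^2
  have hre : h.re = (E - G) / 4 := by
    rw [hh]
    simp [cdot, Fin.sum_univ_three, hφ, Complex.mul_re, Complex.mul_im]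
    rw [hE, hG]; ring
  have him : h.im = -(F / 2) := by
    rw [hh]
    simp [cdot, Fin.sum_univ_three, hφ, Complex.mul_re, Complex.mul_im]
    rw [hF]; ring
  have habsh : ‖h‖ ^ 2 = ((E - G) / 4) ^ 2 + (F / 2) ^ 2 := by
    rw [Complex.sq_norm, Complex.normSq_apply, hre, him]; ring
  -- the QC inequality in scalar form
  have hdiff : hnorm2 φ ^ 2 - ‖h‖ ^ 2 = (E * G - F ^ 2) / 4 := by
    rw [hn2, habsh]; ring
  have hsqrt : Real.sqrt ((E * G - F ^ 2) / 4) = w / 2 := by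
    rw [show (E * G - F ^ 2) / 4 = (w / 2) ^ 2 by rw [div_pow, hw2]; ring,
      Real.sqrt_sq (by positivity)]
  rw [hdiff, hsqrt, hn2] at hQC
  have hS : K * (E + G) ≤ (K ^ 2 + 1) * w := by
    have h1 : (K ^ 2 + 1) / (2 * K) * (w / 2) = ((K ^ 2 + 1) * w) / (4 * K) := by
      field_simp; ring
    rw [h1, le_div_iff₀ (by positivity)] at hQC
    linarith
  -- |φ·b|^2
  have hcb : ‖cdot φ (fun i => (b i : ℂ))‖ ^ 2 = (p ^ 2 + q ^ 2) / 4 := by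
    have hre2 : (cdot φ (fun i => (b i : ℂ))).re = p / 2 := by
      simp [cdot, Fin.sum_univ_three, hφ, Complex.mul_re, Complex.mul_im]
      rw [hp]; ring
    have him2 : (cdot φ (fun i => (b i : ℂ))).im = -(q / 2) := by
      simp [cdot, Fin.sum_univ_three, hφ, Complex.mul_re, Complex.mul_im]
      rw [hq]; ring
    rw [Complex.sq_norm, Complex.normSq_apply, hre2, him2]; ring
  -- |b| = 1
  have hB : b 0 ^ 2 + b 1 ^ 2 + b 2 ^ 2 = 1 := by
    have hnn : 0 ≤ rnorm2 b := by
      simp [rnorm2, Fin.sum_univ_three]; positivity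
    have := congrArg (· ^ 2) hb
    simp only [Real.sq_sqrt hnn, one_pow] at this
    simpa [rnorm2, Fin.sum_univ_three] using this
  -- rdot 𝔫 b
  have hWeq : rnorm2 (rcross u v) = E * G - F ^ 2 := by
    simp [rnorm2, rcross, Fin.sum_univ_three]
    rw [hE, hG, hF]; ring
  have hTlag : (rdot (rcross u v) b) ^ 2
      = (E * G - F ^ 2) - (p ^ 2 * G + q ^ 2 * E - 2 * (p * q) * F) := by
    have : (rdot (rcross u v) b) ^ 2 = (E * G - F ^ 2) * (b 0 ^ 2 + b 1 ^ 2 + b 2 ^ 2)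
        - (p ^ 2 * G + q ^ 2 * E - 2 * (p * q) * F) := by
      simp only [rdot, rcross, Fin.sum_univ_three]
      rw [hE, hG, hF, hp, hq]
      simp [Matrix.cons_val_zero, Matrix.cons_val_one, Matrix.head_cons]
      ring
    rw [this, hB]; ring
  have hndotb : rdot 𝔫 b = rdot (rcross u v) b / w := by
    have hs : Real.sqrt (rnorm2 (rcross u v)) = w := by rw [hWeq, hwdef]
    simp only [rdot, h𝔫, hs, Fin.sum_univ_three]
    ring
  have eq3 : (1 - (rdot 𝔫 b) ^ 2) / 2
      = (p ^ 2 * G + q ^ 2 * E - 2 * (p * q) * F) / (2 * (E * G - F ^ 2)) := by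
    have h1 : (E * G - F ^ 2 - (p ^ 2 * G + q ^ 2 * E - 2 * (p * q) * F))
          / (E * G - F ^ 2)
        = 1 - (p ^ 2 * G + q ^ 2 * E - 2 * (p * q) * F) / (E * G - F ^ 2) := by
      rw [sub_div, div_self (ne_of_gt hWpos)]
    rw [hndotb, div_pow, hw2, hTlag, h1,
      show (2:ℝ) * (E * G - F ^ 2) = (E * G - F ^ 2) * 2 by ring, ← div_div]
    ring
  rw [hn2, hcb, eq3]
  constructor
  · have key := key_lower K E G F p q w hK hEpos.le hGnn hwpos.le hw2 hWpos hS
    have hrw : (K ^ 2 + 1) / (2 * K ^ 2) * ((p ^ 2 + q ^ 2) / 4) / ((E + G) / 4)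
        = ((K ^ 2 + 1) * (p ^ 2 + q ^ 2)) / (2 * K ^ 2 * (E + G)) := by
      field_simp
    rw [hrw, div_le_div_iff₀ (by positivity) (by positivity)]
    linarith [key]
  · have key := key_upper K E G F p q w hK hEpos.le hGnn hwpos.le hw2 hWpos hS
    have hrw : (K ^ 2 + 1) / 2 * ((p ^ 2 + q ^ 2) / 4) / ((E + G) / 4)
        = ((K ^ 2 + 1) * (p ^ 2 + q ^ 2)) / (2 * (E + G)) := by
      field_simp
    rw [hrw, div_le_div_iff₀ (by positivity) (by positivity)]
    linarith [key]
end

section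
/- Let n, k, q be integers with 1 ≤ k ≤ n − 1. Let θ > 0 and ϖ(1), …, ϖ(q) > 0 be real numbers such that ϖ(j)·θ ≤ 1 for all j, q − 2(n−1) + k − 1 = θ·(Σⱼϖ(j) − (k+1)), and θ ≤ (2n−k−1)/(k+1). Let η(1), …, η(q) ≥ 0 be reals with Σⱼ(1 − η(j)) > (2n−k−1)·(k/2 + 1). Then Σⱼ ϖ(j)(1 − η(j)) − (k+1)(k/2 + 1) ≥ ((k+1)/(2n−k−1))·(Σⱼ(1 − η(j)) − (2n−k−1)(k/2+1)) > 0. -/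
/-! Writing `A = 2n − k − 1` and `S = Σ (1 − η j)`, the normalisation of the Nochka weights reads
`θ Σ ϖ = q − A + θ (k + 1)`. Since `ϖ j θ ≤ 1` and `η j ≥ 0`, discarding the defects costs at most
`Σ η / θ`, so `θ Σ ϖ (1 − η) ≥ S − A + θ (k + 1)`. Finally `1/θ ≥ (k+1)/A` and `S > A`. -/

open Finset

section WeightedSum

variable {ι : Type*} (s : Finset ι) {w η : ι → ℝ} {θ : ℝ}

theorem mul_sum_mul_le_sum (hw : ∀ j ∈ s, w j * θ ≤ 1) (hη : ∀ j ∈ s, 0 ≤ η j) :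
    θ * ∑ j ∈ s, w j * η j ≤ ∑ j ∈ s, η j := by
  rw [mul_sum]
  refine sum_le_sum fun j hj => ?_
  calc θ * (w j * η j) = (w j * θ) * η j := by ring
    _ ≤ η j := mul_le_of_le_one_left (hη j hj) (hw j hj)

theorem mul_sum_sub_sum_le_mul_sum_mul_one_sub (hw : ∀ j ∈ s, w j * θ ≤ 1)
    (hη : ∀ j ∈ s, 0 ≤ η j) :
    θ * ∑ j ∈ s, w j - ∑ j ∈ s, η j ≤ θ * ∑ j ∈ s, w j * (1 - η j) := by
  have h := mul_sum_mul_le_sum s hw hη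
  simp only [mul_sub, mul_one, sum_sub_distrib] at h ⊢
  linarith

end WeightedSum

theorem div_mul_sub_mul_le_sub_mul {A B c θ S X : ℝ} (hA : 0 < A) (hθ : 0 < θ)
    (hθc : θ * c ≤ A) (hAS : A ≤ S) (hX : S - A + θ * c ≤ θ * X) :
    c / A * (S - A * B) ≤ X - c * B := by
  have hscale : c / A * (S - A) ≤ (S - A) / θ := by
    rw [div_mul_eq_mul_div, div_le_div_iff₀ hA hθ]
    nlinarith [sub_nonneg.mpr hAS]
  have hXθ : (S - A) / θ + c ≤ X := by
    rw [div_add' _ _ _ hθ.ne', div_le_iff₀ hθ]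
    linarith
  have hsplit : c / A * (S - A * B) = c / A * (S - A) + c - c * B := by
    field_simp
    ring
  linarith

theorem defect_relation_arithmetic_general (n k q : ℕ) (hkn : k + 1 ≤ n)
    (θ : ℝ) (hθ : 0 < θ)
    (ϖ : Fin q → ℝ) (hϖθ : ∀ j, ϖ j * θ ≤ 1)
    (hsumϖ : (q : ℝ) - 2 * ((n : ℝ) - 1) + k - 1 = θ * (∑ j, ϖ j - (k + 1)))
    (hθle : θ ≤ (2 * (n : ℝ) - k - 1) / ((k : ℝ) + 1))
    (η : Fin q → ℝ) (hη : ∀ j, 0 ≤ η j)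
    (hsumη : (2 * (n : ℝ) - k - 1) * ((k : ℝ) / 2 + 1) < ∑ j, (1 - η j)) :
    ∑ j, ϖ j * (1 - η j) - ((k : ℝ) + 1) * ((k : ℝ) / 2 + 1)
        ≥ (((k : ℝ) + 1) / (2 * (n : ℝ) - k - 1)) *
            (∑ j, (1 - η j) - (2 * (n : ℝ) - k - 1) * ((k : ℝ) / 2 + 1))
      ∧ 0 < (((k : ℝ) + 1) / (2 * (n : ℝ) - k - 1)) *
            (∑ j, (1 - η j) - (2 * (n : ℝ) - k - 1) * ((k : ℝ) / 2 + 1)) := by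
  have hkn' : (k : ℝ) + 1 ≤ n := by exact_mod_cast hkn
  have hA : 0 < 2 * (n : ℝ) - k - 1 := by linarith
  have hk : (0 : ℝ) ≤ k := k.cast_nonneg
  have hS : ∑ j, (1 - η j) = q - ∑ j, η j := by simp [sum_sub_distrib]
  have hweighted := mul_sum_sub_sum_le_mul_sum_mul_one_sub univ (fun j _ => hϖθ j)
    (fun j _ => hη j)
  have hθc : θ * ((k : ℝ) + 1) ≤ 2 * n - k - 1 := (le_div_iff₀ (by linarith)).mp hθle
  have hAS : 2 * (n : ℝ) - k - 1 ≤ ∑ j, (1 - η j) := by nlinarith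
  refine ⟨div_mul_sub_mul_le_sub_mul hA hθ hθc hAS (by linarith), ?_⟩
  exact mul_pos (div_pos (by linarith) hA) (sub_pos.mpr hsumη)

/-- Key arithmetic estimate in the proof of the modified defect relation:
if `1 ≤ k ≤ n − 1`, `ϖ(j)θ ≤ 1`, `q − 2(n−1) + k − 1 = θ(Σϖ(j) − (k+1))`,
`θ ≤ (2n−k−1)/(k+1)`, `η(j) ≥ 0`, and `Σ(1 − η(j)) > (2n−k−1)(k/2 + 1)`, then
`Σϖ(j)(1 − η(j)) − (k+1)(k/2+1)
  ≥ ((k+1)/(2n−k−1))·(Σ(1 − η(j)) − (2n−k−1)(k/2+1)) > 0`. -/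
theorem defect_relation_arithmetic (n k q : ℕ) (hk : 1 ≤ k) (hkn : k + 1 ≤ n)
    (θ : ℝ) (hθ : 0 < θ)
    (ϖ : Fin q → ℝ) (hϖpos : ∀ j, 0 < ϖ j) (hϖθ : ∀ j, ϖ j * θ ≤ 1)
    (hsumϖ : (q : ℝ) - 2 * ((n : ℝ) - 1) + k - 1 = θ * (∑ j, ϖ j - (k + 1)))
    (hθle : θ ≤ (2 * (n : ℝ) - k - 1) / ((k : ℝ) + 1))
    (η : Fin q → ℝ) (hη : ∀ j, 0 ≤ η j)
    (hsumη : (2 * (n : ℝ) - k - 1) * ((k : ℝ) / 2 + 1) < ∑ j, (1 - η j)) :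
    ∑ j, ϖ j * (1 - η j) - ((k : ℝ) + 1) * ((k : ℝ) / 2 + 1)
        ≥ (((k : ℝ) + 1) / (2 * (n : ℝ) - k - 1)) *
            (∑ j, (1 - η j) - (2 * (n : ℝ) - k - 1) * ((k : ℝ) / 2 + 1))
      ∧ 0 < (((k : ℝ) + 1) / (2 * (n : ℝ) - k - 1)) *
            (∑ j, (1 - η j) - (2 * (n : ℝ) - k - 1) * ((k : ℝ) / 2 + 1)) :=
  defect_relation_arithmetic_general n k q hkn θ hθ ϖ hϖθ hsumϖ hθle η hη hsumη
end

section
/- Nochka's product lemma: Let a₁, …, a_q ∈ ℂ^{k+1} be nonzero vectors and ϖ(1), …, ϖ(q) ∈ (0, 1] real numbers such that for every subset B ⊆ {1, …, q} with #B ≤ n + 1 one has Σ_{j∈B} ϖ(j) ≤ dim_ℂ span{a_j : j ∈ B}. Let E₁, …, E_q be real numbers with E_j > 1 for all j. Then for every subset B ⊆ {1, …, q} with 0 < #B ≤ n + 1 there exists a subset B₁ ⊆ B such that the family {a_j}_{j∈B₁} is a basis of the linear span of {a_j}_{j∈B} and ∏_{j∈B} E_j^{ϖ(j)} ≤ ∏_{j∈B₁}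 E_j. -/
open Submodule

/-- rank of `insert` goes up by one when the new vector is outside the span. -/
private lemma rank_insert_aux {k : ℕ} (x : Fin (k+1) → ℂ) (s : Set (Fin (k+1) → ℂ))
    (hx : x ∉ Submodule.span ℂ s) :
    Module.finrank ℂ (Submodule.span ℂ (insert x s)) =
      Module.finrank ℂ (Submodule.span ℂ s) + 1 := by
  have hx0 : x ≠ 0 := by rintro rfl; exact hx (Submodule.zero_mem _)
  have hinf : (ℂ ∙ x) ⊓ Submodule.span ℂ s = ⊥ := by
    rw [eq_bot_iff]
    rintro y ⟨hy1, hy2⟩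
    rcases Submodule.mem_span_singleton.1 hy1 with ⟨c, rfl⟩
    rcases eq_or_ne c 0 with rfl | hc
    · simp
    · have hx' : x ∈ Submodule.span ℂ s := by
        have h := Submodule.smul_mem (Submodule.span ℂ s) c⁻¹ hy2
        rwa [smul_smul, inv_mul_cancel₀ hc, one_smul] at h
      exact absurd hx' hx
  have := Submodule.finrank_sup_add_finrank_inf_eq (ℂ ∙ x) (Submodule.span ℂ s)
  rw [hinf, finrank_bot, add_zero, finrank_span_singleton hx0] at this
  rw [Submodule.span_insert, this, add_comm]

private lemma indep_insert {k q : ℕ} (a : Fin q → (Fin (k + 1) → ℂ)) (B₁ : Finset (Fin q))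
    (j₀ : Fin q) (hj : j₀ ∉ B₁)
    (h1 : LinearIndependent ℂ (fun j : B₁ => a j.1))
    (h2 : a j₀ ∉ Submodule.span ℂ (a '' ↑B₁)) :
    LinearIndependent ℂ (fun j : (insert j₀ B₁ : Finset (Fin q)) => a j.1) := by
  have hj' : j₀ ∉ (↑B₁ : Set (Fin q)) := by simpa using hj
  have := (linearIndepOn_insert (f := a) hj').2 ⟨h1, h2⟩
  have hcoe : insert j₀ (↑B₁ : Set (Fin q)) = ((insert j₀ B₁ : Finset (Fin q)) : Set (Fin q)) :=
    (Finset.coe_insert _ _).symm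
  rw [hcoe] at this
  exact this

private lemma nochka_aux (k q : ℕ)
    (a : Fin q → (Fin (k + 1) → ℂ)) (ha : ∀ j, a j ≠ 0)
    (ϖ : Fin q → ℝ) (hϖ : ∀ j, 0 < ϖ j ∧ ϖ j ≤ 1)
    (E : Fin q → ℝ) (hE : ∀ j, 1 < E j) :
    ∀ m : ℕ, ∀ B : Finset (Fin q), B.card = m → B.Nonempty →
      (∀ S ⊆ B, ∑ j ∈ S, ϖ j ≤ (Module.finrank ℂ (Submodule.span ℂ (a '' ↑S)) : ℝ)) →
      ∀ e₀ : ℝ, 1 < e₀ → (∀ j ∈ B, e₀ ≤ E j) →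
      ∃ B₁ ⊆ B,
        (LinearIndependent ℂ (fun j : B₁ => a j.1) ∧
          Submodule.span ℂ (a '' ↑B₁) = Submodule.span ℂ (a '' ↑B)) ∧
        ∏ j ∈ B, E j ^ ϖ j ≤ (∏ j ∈ B₁, E j) *
          e₀ ^ ((∑ j ∈ B, ϖ j) - (Module.finrank ℂ (Submodule.span ℂ (a '' ↑B)) : ℝ)) := by
  intro m
  induction m using Nat.strong_induction_on with
  | _ m IH =>
  intro B hBm hBne hS e₀ he₀ he₀le
  classical
  obtain ⟨j₀, hj₀B, hj₀min⟩ := B.exists_min_image E hBne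
  set B' := B.erase j₀ with hB'def
  have hj₀nB' : j₀ ∉ B' := Finset.notMem_erase _ _
  have hBins : B = insert j₀ B' := (Finset.insert_erase hj₀B).symm
  have hE₀pos : (0:ℝ) < E j₀ := lt_trans one_pos (hE j₀)
  have he₀pos : (0:ℝ) < e₀ := lt_trans one_pos he₀
  have he₀j₀ : e₀ ≤ E j₀ := he₀le j₀ hj₀B
  -- key one-element estimate : E j₀ ^ ϖ j₀ ≤ E j₀ * b ^ (ϖ j₀ - 1)  whenever 0 < b ≤ E j₀
  have key : ∀ b : ℝ, 0 < b → b ≤ E j₀ → E j₀ ^ ϖ j₀ ≤ E j₀ * b ^ (ϖ j₀ - 1) := by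
    intro b hb hble
    have h1 : E j₀ ^ ϖ j₀ = E j₀ * E j₀ ^ (ϖ j₀ - 1) := by
      have h2 := Real.rpow_add hE₀pos 1 (ϖ j₀ - 1)
      rw [Real.rpow_one] at h2
      rw [show (1 : ℝ) + (ϖ j₀ - 1) = ϖ j₀ by ring] at h2
      exact h2
    rw [h1]
    exact mul_le_mul_of_nonneg_left
      (Real.rpow_le_rpow_of_nonpos hb hble (by linarith [(hϖ j₀).2])) (le_of_lt hE₀pos)
  by_cases hB'ne : B'.Nonempty
  · -- inductive step
    have hcard' : B'.card < m := by
      rw [← hBm, hB'def]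
      exact Finset.card_erase_lt_of_mem hj₀B
    have hS' : ∀ S ⊆ B', ∑ j ∈ S, ϖ j ≤
        (Module.finrank ℂ (Submodule.span ℂ (a '' ↑S)) : ℝ) := by
      intro S hSB'; exact hS S (hSB'.trans (Finset.erase_subset _ _))
    have hBcoe : (↑B : Set (Fin q)) = insert j₀ (↑B' : Set (Fin q)) := by
      rw [hBins]; exact Finset.coe_insert _ _
    have himg : a '' (↑B : Set (Fin q)) = insert (a j₀) (a '' ↑B') := by
      rw [hBcoe, Set.image_insert_eq]
    have hsum : ∑ j ∈ B, ϖ j = ϖ j₀ + ∑ j ∈ B', ϖ j := by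
      rw [hBins, Finset.sum_insert hj₀nB']
    have hprod : ∏ j ∈ B, E j ^ ϖ j = E j₀ ^ ϖ j₀ * ∏ j ∈ B', E j ^ ϖ j := by
      rw [hBins, Finset.prod_insert hj₀nB']
    by_cases hmem : a j₀ ∈ Submodule.span ℂ (a '' (↑B' : Set (Fin q)))
    · -- case B : rank unchanged; use IH with lower bound E j₀
      have hspanEq : Submodule.span ℂ (a '' (↑B : Set (Fin q))) =
          Submodule.span ℂ (a '' (↑B' : Set (Fin q))) := by
        rw [himg]; exact Submodule.span_insert_eq_span hmem
      obtain ⟨B₁, hB₁sub, ⟨hind, hspan⟩, hineq⟩ :=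
        IH B'.card hcard' B' rfl hB'ne hS' (E j₀) (hE j₀)
          (fun j hj => hj₀min j (Finset.mem_of_mem_erase hj))
      refine ⟨B₁, hB₁sub.trans (Finset.erase_subset _ _), ⟨hind, by rw [hspan, hspanEq]⟩, ?_⟩
      have hQpos : (0:ℝ) < ∏ j ∈ B₁, E j :=
        Finset.prod_pos (fun j _ => lt_trans one_pos (hE j))
      rw [hprod, hsum, hspanEq]
      set r : ℝ := (Module.finrank ℂ (Submodule.span ℂ (a '' (↑B' : Set (Fin q)))) : ℝ)
      have hstep : ∏ j ∈ B', E j ^ ϖ j ≤ (∏ j ∈ B₁, E j) * E j₀ ^ ((∑ j ∈ B', ϖ j) - r) :=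
        hineq
      have hσr : ϖ j₀ + (∑ j ∈ B', ϖ j) - r ≤ 0 := by
        have := hS B (subset_refl _)
        rw [hsum, hspanEq] at this
        linarith
      calc E j₀ ^ ϖ j₀ * ∏ j ∈ B', E j ^ ϖ j
          ≤ E j₀ ^ ϖ j₀ * ((∏ j ∈ B₁, E j) * E j₀ ^ ((∑ j ∈ B', ϖ j) - r)) := by
            have hpos : (0:ℝ) ≤ E j₀ ^ ϖ j₀ := le_of_lt (Real.rpow_pos_of_pos hE₀pos _)
            exact mul_le_mul_of_nonneg_left hstep hpos
        _ = (∏ j ∈ B₁, E j) * E j₀ ^ (ϖ j₀ + (∑ j ∈ B', ϖ j) - r) := by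
            rw [show ϖ j₀ + (∑ j ∈ B', ϖ j) - r = ϖ j₀ + ((∑ j ∈ B', ϖ j) - r) by ring,
              Real.rpow_add hE₀pos]
            ring
        _ ≤ (∏ j ∈ B₁, E j) * e₀ ^ (ϖ j₀ + (∑ j ∈ B', ϖ j) - r) := by
            have := Real.rpow_le_rpow_of_nonpos he₀pos he₀j₀ hσr
            exact mul_le_mul_of_nonneg_left this (le_of_lt hQpos)
        _ = (∏ j ∈ B₁, E j) * e₀ ^ (ϖ j₀ + ∑ j ∈ B', ϖ j - r) := by ring_nf
    · -- case A : rank grows by one; use IH with lower bound e₀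
      obtain ⟨B₁', hB₁sub, ⟨hind, hspan⟩, hineq⟩ :=
        IH B'.card hcard' B' rfl hB'ne hS' e₀ he₀
          (fun j hj => he₀le j (Finset.mem_of_mem_erase hj))
      have hj₀nB₁ : j₀ ∉ B₁' := fun h => hj₀nB' (hB₁sub h)
      have hmem' : a j₀ ∉ Submodule.span ℂ (a '' (↑B₁' : Set (Fin q))) := by
        rw [hspan]; exact hmem
      refine ⟨insert j₀ B₁', ?_, ⟨indep_insert a B₁' j₀ hj₀nB₁ hind hmem', ?_⟩, ?_⟩
      · rw [hBins]; exact Finset.insert_subset_insert _ hB₁sub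
      · -- span equality
        have h1 : a '' (↑(insert j₀ B₁') : Set (Fin q)) = insert (a j₀) (a '' ↑B₁') := by
          rw [Finset.coe_insert, Set.image_insert_eq]
        rw [h1, himg, Submodule.span_insert, Submodule.span_insert, hspan]
      · -- the inequality
        have hrank : (Module.finrank ℂ (Submodule.span ℂ (a '' (↑B : Set (Fin q)))) : ℝ) =
            (Module.finrank ℂ (Submodule.span ℂ (a '' (↑B' : Set (Fin q)))) : ℝ) + 1 := by
          rw [himg, rank_insert_aux _ _ hmem]
          push_cast
          ring
        set r' : ℝ := (Module.finrank ℂ (Submodule.span ℂ (a '' (↑B' : Set (Fin q)))) : ℝ)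
        have hQpos : (0:ℝ) < ∏ j ∈ B₁', E j :=
          Finset.prod_pos (fun j _ => lt_trans one_pos (hE j))
        have hprodins : ∏ j ∈ insert j₀ B₁', E j = E j₀ * ∏ j ∈ B₁', E j :=
          Finset.prod_insert hj₀nB₁
        rw [hprod, hsum, hrank, hprodins]
        calc E j₀ ^ ϖ j₀ * ∏ j ∈ B', E j ^ ϖ j
            ≤ (E j₀ * e₀ ^ (ϖ j₀ - 1)) * ((∏ j ∈ B₁', E j) * e₀ ^ ((∑ j ∈ B', ϖ j) - r')) := by
              apply mul_le_mul (key e₀ he₀pos he₀j₀) hineq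
              · exact le_of_lt (Finset.prod_pos (fun j _ =>
                  Real.rpow_pos_of_pos (lt_trans one_pos (hE j)) _))
              · exact le_of_lt (mul_pos hE₀pos (Real.rpow_pos_of_pos he₀pos _))
          _ = E j₀ * (∏ j ∈ B₁', E j) * e₀ ^ (ϖ j₀ + (∑ j ∈ B', ϖ j) - (r' + 1)) := by
              rw [show ϖ j₀ + (∑ j ∈ B', ϖ j) - (r' + 1)
                  = (ϖ j₀ - 1) + ((∑ j ∈ B', ϖ j) - r') by ring, Real.rpow_add he₀pos]
              ring
  · -- base case : B = {j₀}
    have hBsing : B = {j₀} := by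
      rw [hBins]
      rw [Finset.not_nonempty_iff_eq_empty] at hB'ne
      rw [hB'ne]; rfl
    subst hBsing
    have himg : a '' (↑({j₀} : Finset (Fin q)) : Set (Fin q)) = {a j₀} := by
      simp
    have hrank : (Module.finrank ℂ
        (Submodule.span ℂ (a '' (↑({j₀} : Finset (Fin q)) : Set (Fin q)))) : ℝ) = 1 := by
      rw [himg]
      have : Submodule.span ℂ ({a j₀} : Set (Fin (k+1) → ℂ)) = ℂ ∙ (a j₀) := rfl
      rw [this, finrank_span_singleton (ha j₀)]
      norm_num
    refine ⟨{j₀}, subset_refl _, ⟨?_, rfl⟩, ?_⟩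
    · -- linear independence of a singleton family
      have : j₀ ∉ (∅ : Finset (Fin q)) := Finset.notMem_empty _
      have hemp : LinearIndependent ℂ (fun j : (∅ : Finset (Fin q)) => a j.1) := by
        apply linearIndependent_empty_type
      have h2 : a j₀ ∉ Submodule.span ℂ (a '' (↑(∅ : Finset (Fin q)) : Set (Fin q))) := by
        simp [ha j₀]
      simpa using indep_insert a ∅ j₀ this hemp h2
    · rw [hrank]
      simp only [Finset.prod_singleton, Finset.sum_singleton]
      exact key e₀ he₀pos he₀j₀

/-- Nochka's product lemma: let `a₁, …, a_q ∈ ℂ^{k+1}` be nonzero and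
`ϖ(j) ∈ (0,1]` be such that `Σ_{j∈B} ϖ(j) ≤ dim span{a_j : j ∈ B}` whenever
`#B ≤ n+1`. If `E_j > 1` for all `j`, then for every `B` with `0 < #B ≤ n+1`
there is `B₁ ⊆ B` such that `{a_j}_{j∈B₁}` is a basis of `span{a_j : j∈B}` and
`∏_{j∈B} E_j^{ϖ(j)} ≤ ∏_{j∈B₁} E_j`. -/
theorem nochka_product_lemma (n k q : ℕ)
    (a : Fin q → (Fin (k + 1) → ℂ)) (ha : ∀ j, a j ≠ 0)
    (ϖ : Fin q → ℝ) (hϖ : ∀ j, 0 < ϖ j ∧ ϖ j ≤ 1)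
    (hN : ∀ B : Finset (Fin q), B.card ≤ n + 1 →
      ∑ j ∈ B, ϖ j ≤ (Module.finrank ℂ (Submodule.span ℂ (a '' ↑B)) : ℝ))
    (E : Fin q → ℝ) (hE : ∀ j, 1 < E j) :
    ∀ B : Finset (Fin q), 0 < B.card → B.card ≤ n + 1 →
      ∃ B₁ ⊆ B,
        (LinearIndependent ℂ (fun j : B₁ => a j.1) ∧
          Submodule.span ℂ (a '' ↑B₁) = Submodule.span ℂ (a '' ↑B)) ∧
        ∏ j ∈ B, E j ^ ϖ j ≤ ∏ j ∈ B₁, E j := by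
  intro B hBpos hBcard
  have hBne : B.Nonempty := Finset.card_pos.1 hBpos
  obtain ⟨j₀, hj₀B, hj₀min⟩ := B.exists_min_image E hBne
  have hS : ∀ S ⊆ B, ∑ j ∈ S, ϖ j ≤
      (Module.finrank ℂ (Submodule.span ℂ (a '' ↑S)) : ℝ) := by
    intro S hSB
    exact hN S (le_trans (Finset.card_le_card hSB) hBcard)
  obtain ⟨B₁, hB₁sub, hbasis, hineq⟩ :=
    nochka_aux k q a ha ϖ hϖ E hE B.card B rfl hBne hS (E j₀) (hE j₀) hj₀min
  refine ⟨B₁, hB₁sub, hbasis, le_trans hineq ?_⟩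
  have hQpos : (0:ℝ) < ∏ j ∈ B₁, E j :=
    Finset.prod_pos (fun j _ => lt_trans one_pos (hE j))
  have hexp : (∑ j ∈ B, ϖ j) -
      (Module.finrank ℂ (Submodule.span ℂ (a '' (↑B : Set (Fin q)))) : ℝ) ≤ 0 := by
    linarith [hS B (subset_refl _)]
  have := Real.rpow_le_one_of_one_le_of_nonpos (le_of_lt (hE j₀)) hexp
  calc (∏ j ∈ B₁, E j) * (E j₀) ^ ((∑ j ∈ B, ϖ j) -
        (Module.finrank ℂ (Submodule.span ℂ (a '' (↑B : Set (Fin q)))) : ℝ))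
      ≤ (∏ j ∈ B₁, E j) * 1 := mul_le_mul_of_nonneg_left this (le_of_lt hQpos)
    _ = ∏ j ∈ B₁, E j := mul_one _
end

section
/- Nochka's theorem (existence of Nochka weights): Let k ≤ n and q > 2n − k + 1 be positive integers, and let a₁, …, a_q ∈ ℂ^{k+1}∖{0} be in n-subgeneral position, i.e. every subset of n + 1 of them spans ℂ^{k+1}. Then there exist real numbers ϖ(1), …, ϖ(q) and θ > 0 such that: (i) 0 < ϖ(j)·θ ≤ 1 for all 1 ≤ j ≤ q; (ii) q − 2n + k − 1 = θ·(Σ_{j=1}^q ϖ(j) − (k+1)); (iii) 1 ≤ (n+1)/(k+1) ≤ θ ≤ (2n−k+1)/(k+1); (iv) for every B ⊆ {1, …, q} with #B ≤ n + 1, Σ_{j∈B} ϖ(j) ≤ dim_ℂ span{a_j : j ∈ B}. -/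
open Module Finset

set_option maxHeartbeats 1000000

namespace NochkaAux

variable {k n q : ℕ}

noncomputable def g (a : Fin q → (Fin (k+1) → ℂ)) (B : Finset (Fin q)) : ℕ :=
  Module.finrank ℂ (Submodule.span ℂ (a '' ↑B))

variable (a : Fin q → (Fin (k+1) → ℂ))

lemma g_empty : g a ∅ = 0 := by
  simp [g]

lemma g_mono {A B : Finset (Fin q)} (h : A ⊆ B) : g a A ≤ g a B := by
  apply Submodule.finrank_mono
  exact Submodule.span_mono (Set.image_mono (by exact_mod_cast h))

lemma g_submod (A B : Finset (Fin q)) :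
    g a (A ∪ B) + g a (A ∩ B) ≤ g a A + g a B := by
  have h1 : Submodule.span ℂ (a '' ↑(A ∪ B)) =
      Submodule.span ℂ (a '' ↑A) ⊔ Submodule.span ℂ (a '' ↑B) := by
    rw [Finset.coe_union, Set.image_union, Submodule.span_union]
  have h2 : Submodule.span ℂ (a '' ↑(A ∩ B)) ≤
      Submodule.span ℂ (a '' ↑A) ⊓ Submodule.span ℂ (a '' ↑B) := by
    refine le_inf ?_ ?_ <;>
      exact Submodule.span_mono (Set.image_mono (by simp [Finset.coe_inter]))
  calc g a (A ∪ B) + g a (A ∩ B)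
      ≤ finrank ℂ ↥(Submodule.span ℂ (a '' ↑A) ⊔ Submodule.span ℂ (a '' ↑B)) +
        finrank ℂ ↥(Submodule.span ℂ (a '' ↑A) ⊓ Submodule.span ℂ (a '' ↑B)) := by
        refine add_le_add ?_ (Submodule.finrank_mono h2)
        rw [g, h1]
    _ = g a A + g a B := Submodule.finrank_sup_add_finrank_inf_eq _ _

lemma g_le_card (B : Finset (Fin q)) : g a B ≤ B.card := by
  have h : (a '' ↑B) = ↑(B.image a) := by rw [Finset.coe_image]
  rw [g, h]
  exact (finrank_span_finset_le_card (B.image a)).trans (Finset.card_image_le)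

lemma g_le_top (B : Finset (Fin q)) : g a B ≤ k + 1 := by
  have := Submodule.finrank_le (Submodule.span ℂ (a '' ↑B))
  simpa [g, finrank_pi] using this

lemma g_pos (ha : ∀ j, a j ≠ 0) {B : Finset (Fin q)} (hB : B.Nonempty) : 1 ≤ g a B := by
  obtain ⟨j, hj⟩ := hB
  have h1 : Submodule.span ℂ {a j} ≤ Submodule.span ℂ (a '' ↑B) :=
    Submodule.span_mono (Set.singleton_subset_iff.2 (Set.mem_image_of_mem a (Finset.mem_coe.2 hj)))
  have := Submodule.finrank_mono (s := Submodule.span ℂ {a j})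
    (t := Submodule.span ℂ (a '' ↑B)) h1
  rwa [finrank_span_singleton (ha j)] at this

lemma g_union_le (A B : Finset (Fin q)) : g a (A ∪ B) ≤ g a A + g a B := by
  have := g_submod a A B
  omega

lemma g_diff_le {A B : Finset (Fin q)} (h : A ⊆ B) :
    g a B ≤ g a A + (B \ A).card := by
  have h1 : B = A ∪ (B \ A) := by
    rw [Finset.union_sdiff_of_subset h]
  calc g a B = g a (A ∪ (B \ A)) := by rw [← h1]
    _ ≤ g a A + g a (B \ A) := g_union_le a _ _
    _ ≤ g a A + (B \ A).card := by
        exact Nat.add_le_add_left (g_le_card a _) _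


/-- subgeneral position counting: a set with small span is small. -/
lemma card_le_of_g_le (hkn : k ≤ n) (hq : 2 * n - k + 1 < q)
    (hgen : ∀ B : Finset (Fin q), B.card = n + 1 →
      Submodule.span ℂ (a '' ↑B) = ⊤)
    {B : Finset (Fin q)} (hB : g a B ≤ k) : B.card + k ≤ n + g a B := by
  by_contra hcon
  push_neg at hcon
  set G := g a B with hG
  -- pick B' ⊆ B of card n+1+G-k
  have hqn : n + 1 ≤ q := by omega
  have ht : n + 1 + G - k ≤ B.card := by omega
  obtain ⟨B', hB'sub, hB'card⟩ := Finset.exists_subset_card_eq ht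
  have hB'le : g a B' ≤ G := g_mono a hB'sub
  -- extend to card n+1
  obtain ⟨B'', hB''sub, hB''card⟩ := Finset.exists_superset_card_eq
    (s := B') (n := n + 1) (by omega) (by simpa using hqn)
  have htop : g a B'' = k + 1 := by
    rw [g, hgen B'' hB''card]
    simp [finrank_pi]
  have hdiff : (B'' \ B').card = k - G := by
    rw [Finset.card_sdiff_of_subset hB''sub]
    omega
  have := g_diff_le a hB''sub
  omega


lemma stop_lemma (hkn : k ≤ n) (hq : 2 * n - k + 1 < q)
    (hgen : ∀ B : Finset (Fin q), B.card = n + 1 →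
      Submodule.span ℂ (a '' ↑B) = ⊤)
    (P : Finset (Fin q)) (hgP : g a P ≤ k)
    (hstop : ∀ B : Finset (Fin q), P ⊂ B → g a B ≤ k →
      ((k:ℝ) + 1 - (g a P : ℝ)) / (2*(n:ℝ) - (k:ℝ) + 1 - (P.card : ℝ)) ≤
        ((g a B : ℝ) - (g a P : ℝ)) / ((B.card : ℝ) - (P.card : ℝ))) :
    ∃ (ω : Fin q → ℝ) (c : ℝ),
      ((k:ℝ) + 1 - (g a P : ℝ)) / (2*(n:ℝ) - (k:ℝ) + 1 - (P.card : ℝ)) ≤ c ∧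
      c ≤ ((k:ℝ)+1)/((n:ℝ)+1) ∧
      (∀ j, 0 < ω j ∧ ω j ≤ c) ∧
      (∑ j ∈ Pᶜ, ω j = ((k:ℝ) + 1 - (g a P : ℝ)) + c * ((q:ℝ) - (2*(n:ℝ) - (k:ℝ) + 1))) ∧
      (∀ B : Finset (Fin q), g a B ≤ k →
        ∑ j ∈ B \ P, ω j ≤ (g a B : ℝ) - (g a (B ∩ P) : ℝ)) := by
  have hF2 := card_le_of_g_le a hkn hq hgen hgP
  -- real abbreviations
  set G : ℝ := (g a P : ℝ) with hGdef
  set b : ℝ := (P.card : ℝ) with hbdef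
  have hG0 : 0 ≤ G := by positivity
  have hGk : G ≤ (k:ℝ) := by rw [hGdef]; exact_mod_cast hgP
  have hknR : (k:ℝ) ≤ (n:ℝ) := by exact_mod_cast hkn
  have hbF2 : b + (k:ℝ) ≤ (n:ℝ) + G := by
    rw [hbdef, hGdef]; exact_mod_cast hF2
  have hbn : b ≤ (n:ℝ) := by linarith
  have hden : (0:ℝ) < 2*(n:ℝ) - (k:ℝ) + 1 - b := by linarith
  have hnum : (0:ℝ) < (k:ℝ) + 1 - G := by linarith
  set cbar : ℝ := ((k:ℝ) + 1 - G) / (2*(n:ℝ) - (k:ℝ) + 1 - b) with hcbar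
  have hcbar_pos : 0 < cbar := div_pos hnum hden
  have hkey : cbar * (2*(n:ℝ) - (k:ℝ) + 1 - b) = (k:ℝ) + 1 - G := by
    rw [hcbar]; field_simp
  have hcbar_le_one : cbar ≤ 1 := by
    rw [hcbar, div_le_one hden]; linarith
  have hcbar_le : cbar ≤ ((k:ℝ)+1)/((n:ℝ)+1) := by
    rw [hcbar, div_le_div_iff₀ hden (by linarith)]
    nlinarith [mul_nonneg hG0 (sub_nonneg.2 hknR)]
  refine ⟨fun _ => cbar, cbar, le_refl _, hcbar_le, fun j => ⟨hcbar_pos, le_refl _⟩, ?_, ?_⟩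
  · -- sum over complement
    rw [Finset.sum_const, nsmul_eq_mul]
    have hle : P.card ≤ q := by
      simpa using Finset.card_le_card (Finset.subset_univ P)
    have hcard : ((Pᶜ).card : ℝ) = (q:ℝ) - b := by
      rw [Finset.card_compl, Fintype.card_fin, hbdef, Nat.cast_sub hle]
    rw [hcard]; nlinarith [hkey]
  · -- key inequality
    intro B hgB
    rw [Finset.sum_const, nsmul_eq_mul]
    have hsub := g_submod a B P
    have hsubR : (g a (B ∪ P) : ℝ) + (g a (B ∩ P) : ℝ) ≤ (g a B : ℝ) + G := by
      rw [hGdef]; exact_mod_cast hsub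
    have hcardBP : ((B \ P).card : ℝ) = ((B ∪ P).card : ℝ) - b := by
      have := Finset.card_sdiff_add_card B P
      rw [hbdef]; push_cast [← this]; ring
    rcases le_or_gt (g a (B ∪ P)) k with hC | hC
    · rcases eq_or_lt_of_le (Finset.subset_union_right (s₁ := B) (s₂ := P)) with hCP | hCP
      · -- B ∪ P = P, i.e. B ⊆ P
        have hBP : B ⊆ P := by
          rw [hCP]; exact Finset.subset_union_left
        have : B \ P = ∅ := Finset.sdiff_eq_empty_iff_subset.2 hBP
        rw [this]
        have : B ∩ P = B := Finset.inter_eq_left.2 hBP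
        rw [this]
        simp
      · -- P ⊂ B ∪ P
        have hPC : P ⊂ B ∪ P := hCP
        have hcardlt : P.card < (B ∪ P).card := Finset.card_lt_card hPC
        have hdenC : (0:ℝ) < ((B ∪ P).card : ℝ) - b := by
          have h' : (P.card:ℝ) < ((B ∪ P).card:ℝ) := by exact_mod_cast hcardlt
          rw [hbdef]; linarith
        have h1 := hstop (B ∪ P) hPC hC
        rw [le_div_iff₀ hdenC] at h1
        have h2 : cbar * ((B ∪ P).card - b) ≤ (g a (B ∪ P) : ℝ) - G := h1
        rw [hcardBP]
        nlinarith [h2, hsubR]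
    · -- g (B ∪ P) = k + 1
      have hCK : ((k:ℝ) + 1) ≤ (g a (B ∪ P) : ℝ) := by exact_mod_cast hC
      have hCK' : (g a (B ∪ P) : ℝ) ≤ (k:ℝ) + 1 := by exact_mod_cast g_le_top a (B ∪ P)
      have hdelta : (k:ℝ) + 1 - G ≤ (g a B : ℝ) - (g a (B ∩ P) : ℝ) := by linarith
      have hF2B := card_le_of_g_le a hkn hq hgen hgB
      have hF2BR : (B.card : ℝ) + (k:ℝ) ≤ (n:ℝ) + (g a B : ℝ) := by exact_mod_cast hF2B
      have hgBPcard : (g a (B ∩ P) : ℝ) ≤ ((B ∩ P).card : ℝ) := by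
        exact_mod_cast g_le_card a (B ∩ P)
      have hcard2 : ((B \ P).card : ℝ) = (B.card : ℝ) - ((B ∩ P).card : ℝ) := by
        have h' : ((B \ P).card : ℝ) + ((B ∩ P).card : ℝ) = (B.card:ℝ) := by
          exact_mod_cast Finset.card_sdiff_add_card_inter B P
        linarith
      set δ : ℝ := (g a B : ℝ) - (g a (B ∩ P) : ℝ) with hδ
      have hcard3 : ((B \ P).card : ℝ) ≤ (n:ℝ) - (k:ℝ) + δ := by
        rw [hcard2, hδ]; linarith
      -- goal: card (B\P) * cbar ≤ δ
      have hmb : (n:ℝ) + 1 - G ≤ 2*(n:ℝ) - (k:ℝ) + 1 - b := by linarith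
      have h3 : cbar * ((n:ℝ) + 1 - G) ≤ (k:ℝ) + 1 - G := by
        calc cbar * ((n:ℝ) + 1 - G) ≤ cbar * (2*(n:ℝ) - (k:ℝ) + 1 - b) :=
              mul_le_mul_of_nonneg_left hmb (le_of_lt hcbar_pos)
          _ = (k:ℝ) + 1 - G := hkey
      have hδ1 : (k:ℝ) + 1 - G ≤ δ := hdelta
      calc ((B \ P).card : ℝ) * cbar ≤ ((n:ℝ) - (k:ℝ) + δ) * cbar :=
            mul_le_mul_of_nonneg_right hcard3 (le_of_lt hcbar_pos)
        _ = cbar * ((n:ℝ) + 1 - G) + cbar * (δ - ((k:ℝ) + 1 - G)) := by ring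
        _ ≤ ((k:ℝ) + 1 - G) + 1 * (δ - ((k:ℝ) + 1 - G)) := by
            refine add_le_add h3 (mul_le_mul_of_nonneg_right hcbar_le_one (by linarith))
        _ = δ := by ring


lemma rec_main (hkn : k ≤ n) (hq : 2 * n - k + 1 < q)
    (hgen : ∀ B : Finset (Fin q), B.card = n + 1 →
      Submodule.span ℂ (a '' ↑B) = ⊤) :
    ∀ N : ℕ, ∀ P : Finset (Fin q), n ≤ P.card + N → g a P ≤ k →
    (∀ B : Finset (Fin q), P ⊂ B → g a B ≤ k → g a P < g a B) →
    ∃ (ω : Fin q → ℝ) (c : ℝ),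
      ((k:ℝ) + 1 - (g a P : ℝ)) / (2*(n:ℝ) - (k:ℝ) + 1 - (P.card : ℝ)) ≤ c ∧
      c ≤ ((k:ℝ)+1)/((n:ℝ)+1) ∧
      (∀ j, 0 < ω j ∧ ω j ≤ c) ∧
      (∑ j ∈ Pᶜ, ω j = ((k:ℝ) + 1 - (g a P : ℝ)) + c * ((q:ℝ) - (2*(n:ℝ) - (k:ℝ) + 1))) ∧
      (∀ B : Finset (Fin q), g a B ≤ k →
        ∑ j ∈ B \ P, ω j ≤ (g a B : ℝ) - (g a (B ∩ P) : ℝ)) := by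
  intro N
  induction N with
  | zero =>
    intro P hPN hgP _
    apply stop_lemma a hkn hq hgen P hgP
    intro B hPB hgB
    exfalso
    have h1 := card_le_of_g_le a hkn hq hgen hgB
    have h2 := Finset.card_lt_card hPB
    omega
  | succ N ih =>
    intro P hPN hgP hH
    classical
    by_cases hex : ∃ B : Finset (Fin q), P ⊂ B ∧ g a B ≤ k ∧
        ((g a B : ℝ) - (g a P : ℝ)) / ((B.card : ℝ) - (P.card : ℝ)) <
        ((k:ℝ) + 1 - (g a P : ℝ)) / (2*(n:ℝ) - (k:ℝ) + 1 - (P.card : ℝ))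
    · -- continue case
      obtain ⟨B₁, hB₁P, hB₁g, hB₁r⟩ := hex
      set ratio : Finset (Fin q) → ℝ :=
        fun B => ((g a B : ℝ) - (g a P : ℝ)) / ((B.card : ℝ) - (P.card : ℝ)) with hratio
      set F : Finset (Finset (Fin q)) :=
        Finset.univ.filter (fun B => P ⊂ B ∧ g a B ≤ k) with hF
      have hB₁F : B₁ ∈ F := by simp [hF, hB₁P, hB₁g]
      obtain ⟨P', hP'F, hmin⟩ := Finset.exists_min_image F ratio ⟨B₁, hB₁F⟩
      rw [hF, Finset.mem_filter] at hP'F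
      obtain ⟨-, hPP', hgP'⟩ := hP'F
      have hminF : ∀ B : Finset (Fin q), P ⊂ B → g a B ≤ k → ratio P' ≤ ratio B :=
        fun B h1 h2 => hmin B (by simp [hF, h1, h2])
      have hsub : P ⊆ P' := hPP'.subset
      have hcardlt : P.card < P'.card := Finset.card_lt_card hPP'
      have hGG' : g a P < g a P' := hH P' hPP' hgP'
      -- real facts
      have hdb' : (0:ℝ) < (P'.card : ℝ) - (P.card : ℝ) := by
        have : (P.card:ℝ) < (P'.card:ℝ) := by exact_mod_cast hcardlt
        linarith
      set ρ : ℝ := ratio P' with hρ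
      have hρeq : ρ * ((P'.card : ℝ) - (P.card : ℝ)) = (g a P' : ℝ) - (g a P : ℝ) := by
        rw [hρ, hratio]; field_simp
      have hρpos : 0 < ρ := by
        rw [hρ, hratio]
        apply div_pos _ hdb'
        have : (g a P : ℝ) < (g a P' : ℝ) := by exact_mod_cast hGG'
        linarith
      have hρcbar : ρ < ((k:ℝ) + 1 - (g a P : ℝ)) / (2*(n:ℝ) - (k:ℝ) + 1 - (P.card : ℝ)) :=
        lt_of_le_of_lt (hminF B₁ hB₁P hB₁g) hB₁r
      -- apply IH at P'
      have hH' : ∀ B : Finset (Fin q), P' ⊂ B → g a B ≤ k → g a P' < g a B := by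
        intro B hB hgB
        rcases lt_or_eq_of_le (g_mono a hB.subset) with h | h
        · exact h
        · exfalso
          have hPB : P ⊂ B := hPP'.trans hB
          have hle := hminF B hPB hgB
          have hcardB : (P'.card : ℝ) < (B.card : ℝ) := by
            exact_mod_cast Finset.card_lt_card hB
          have : ratio B < ratio P' := by
            rw [hratio]
            simp only
            rw [← h]
            apply div_lt_div_of_pos_left _ hdb' _
            · have : (g a P : ℝ) < (g a P' : ℝ) := by exact_mod_cast hGG'
              linarith
            · linarith
          linarith [hle, this]
      obtain ⟨ω', c, h1', h2', h3', h4', h5'⟩ := ih P' (by omega) hgP' hH'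
      -- cbar P < cbar P' ≤ c
      have hF2P := card_le_of_g_le a hkn hq hgen hgP
      have hF2P' := card_le_of_g_le a hkn hq hgen hgP'
      have hbF2 : (P.card:ℝ) + (k:ℝ) ≤ (n:ℝ) + (g a P : ℝ) := by exact_mod_cast hF2P
      have hbF2' : (P'.card:ℝ) + (k:ℝ) ≤ (n:ℝ) + (g a P' : ℝ) := by exact_mod_cast hF2P'
      have hknR : (k:ℝ) ≤ (n:ℝ) := by exact_mod_cast hkn
      have hGkR : (g a P : ℝ) ≤ (k:ℝ) := by exact_mod_cast hgP
      have hGkR' : (g a P' : ℝ) ≤ (k:ℝ) := by exact_mod_cast hgP'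
      have hden : (0:ℝ) < 2*(n:ℝ) - (k:ℝ) + 1 - (P.card:ℝ) := by linarith
      have hden' : (0:ℝ) < 2*(n:ℝ) - (k:ℝ) + 1 - (P'.card:ℝ) := by linarith
      have hcross : ((g a P' : ℝ) - (g a P : ℝ)) * (2*(n:ℝ) - (k:ℝ) + 1 - (P.card:ℝ)) <
          ((k:ℝ) + 1 - (g a P : ℝ)) * ((P'.card : ℝ) - (P.card : ℝ)) := by
        rw [hρ, hratio] at hρcbar
        rw [div_lt_div_iff₀ hdb' hden] at hρcbar
        exact hρcbar
      have hcbar_lt : ((k:ℝ) + 1 - (g a P : ℝ)) / (2*(n:ℝ) - (k:ℝ) + 1 - (P.card : ℝ)) <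
          ((k:ℝ) + 1 - (g a P' : ℝ)) / (2*(n:ℝ) - (k:ℝ) + 1 - (P'.card : ℝ)) := by
        rw [div_lt_div_iff₀ hden hden']
        nlinarith [hcross]
      have hcbar_le_c : ((k:ℝ) + 1 - (g a P : ℝ)) / (2*(n:ℝ) - (k:ℝ) + 1 - (P.card : ℝ)) ≤ c :=
        le_of_lt (lt_of_lt_of_le hcbar_lt h1')
      have hρc : ρ ≤ c := le_of_lt (lt_of_lt_of_le hρcbar hcbar_le_c)
      -- define ω
      refine ⟨fun j => if j ∈ P' \ P then ρ else ω' j, c, hcbar_le_c, h2', ?_, ?_, ?_⟩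
      · intro j
        by_cases hj : j ∈ P' \ P
        · simp only [hj, if_true]; exact ⟨hρpos, hρc⟩
        · simp only [hj, if_false]; exact h3' j
      · -- sum over Pᶜ
        have hdecomp : Pᶜ = (P' \ P) ∪ P'ᶜ := by
          ext j
          simp only [Finset.mem_compl, Finset.mem_union, Finset.mem_sdiff]
          constructor
          · intro hj; by_cases h : j ∈ P' <;> tauto
          · intro hj; rcases hj with h | h
            · exact h.2
            · exact fun hjP => h (hsub hjP)
        have hdisj : Disjoint (P' \ P) P'ᶜ := by
          rw [Finset.disjoint_left]
          intro j hj hj'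
          exact (Finset.mem_compl.1 hj') (Finset.mem_sdiff.1 hj).1
        rw [hdecomp, Finset.sum_union hdisj]
        have hs1 : ∑ j ∈ P' \ P, (if j ∈ P' \ P then ρ else ω' j) =
            ((P'.card : ℝ) - (P.card : ℝ)) * ρ := by
          rw [Finset.sum_congr rfl (fun j hj => if_pos hj), Finset.sum_const, nsmul_eq_mul]
          congr 1
          rw [Finset.card_sdiff_of_subset hsub, Nat.cast_sub (Finset.card_le_card hsub)]
        have hs2 : ∑ j ∈ P'ᶜ, (if j ∈ P' \ P then ρ else ω' j) = ∑ j ∈ P'ᶜ, ω' j := by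
          refine Finset.sum_congr rfl (fun j hj => if_neg ?_)
          intro hj'
          exact (Finset.mem_compl.1 hj) (Finset.mem_sdiff.1 hj').1
        rw [hs1, hs2, h4']
        nlinarith [hρeq]
      · -- key inequality
        intro B hgB
        have hdecompB : B \ P = (B ∩ (P' \ P)) ∪ (B \ P') := by
          ext j
          simp only [Finset.mem_sdiff, Finset.mem_union, Finset.mem_inter]
          constructor
          · intro hj; by_cases h : j ∈ P' <;> tauto
          · intro hj
            rcases hj with h | h
            · exact ⟨h.1, h.2.2⟩
            · exact ⟨h.1, fun hjP => h.2 (hsub hjP)⟩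
        have hdisjB : Disjoint (B ∩ (P' \ P)) (B \ P') := by
          rw [Finset.disjoint_left]
          intro j hj hj'
          exact (Finset.mem_sdiff.1 hj').2 (Finset.mem_sdiff.1 (Finset.mem_inter.1 hj).2).1
        rw [hdecompB, Finset.sum_union hdisjB]
        have hs1 : ∑ j ∈ B ∩ (P' \ P), (if j ∈ P' \ P then ρ else ω' j) =
            ((B ∩ (P' \ P)).card : ℝ) * ρ := by
          rw [Finset.sum_congr rfl (fun j hj => if_pos (Finset.mem_inter.1 hj).2),
            Finset.sum_const, nsmul_eq_mul]
        have hs2 : ∑ j ∈ B \ P', (if j ∈ P' \ P then ρ else ω' j) = ∑ j ∈ B \ P', ω' j := by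
          refine Finset.sum_congr rfl (fun j hj => if_neg ?_)
          intro hj'
          exact (Finset.mem_sdiff.1 hj).2 (Finset.mem_sdiff.1 hj').1
        rw [hs1, hs2]
        have hbound2 := h5' B hgB
        -- bound1
        have hbound1 : ((B ∩ (P' \ P)).card : ℝ) * ρ ≤
            (g a (B ∩ P') : ℝ) - (g a (B ∩ P) : ℝ) := by
          set C : Finset (Fin q) := P ∪ (B ∩ P') with hC
          have hPC : P ⊆ C := Finset.subset_union_left
          have hCP' : C ⊆ P' := Finset.union_subset hsub Finset.inter_subset_right
          have hgC : g a C ≤ k := le_trans (g_mono a hCP') hgP'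
          have hCdiff : C \ P = B ∩ (P' \ P) := by
            ext j
            simp only [hC, Finset.mem_sdiff, Finset.mem_union, Finset.mem_inter]
            constructor
            · intro hj
              refine ⟨?_, ?_, hj.2⟩
              · rcases hj.1 with h | h
                · exact absurd h hj.2
                · exact h.1
              · rcases hj.1 with h | h
                · exact absurd h hj.2
                · exact h.2
            · intro hj
              exact ⟨Or.inr ⟨hj.1, hj.2.1⟩, hj.2.2⟩
          have hCcard : ((C.card : ℝ) - (P.card : ℝ)) = ((B ∩ (P' \ P)).card : ℝ) := by
            have h := Finset.card_sdiff_add_card_eq_card hPC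
            rw [hCdiff] at h
            have : ((B ∩ (P' \ P)).card : ℝ) + (P.card : ℝ) = (C.card : ℝ) := by
              exact_mod_cast h
            linarith
          have hPinter : P ∩ (B ∩ P') = B ∩ P := by
            ext j
            simp only [Finset.mem_inter]
            constructor
            · intro hj; exact ⟨hj.2.1, hj.1⟩
            · intro hj; exact ⟨hj.2, hj.1, hsub hj.2⟩
          have hsubmod := g_submod a P (B ∩ P')
          rw [hPinter] at hsubmod
          have hsubmodR : (g a C : ℝ) + (g a (B ∩ P) : ℝ) ≤
              (g a P : ℝ) + (g a (B ∩ P') : ℝ) := by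
            rw [hC]; exact_mod_cast hsubmod
          by_cases hCPeq : C = P
          · have hint : B ∩ (P' \ P) = ∅ := by rw [← hCdiff, hCPeq]; simp
            have hBP'P : B ∩ P' = B ∩ P := by
              apply Finset.Subset.antisymm
              · intro j hj
                have hjC : j ∈ C := Finset.mem_union_right _ hj
                rw [hCPeq] at hjC
                exact Finset.mem_inter.2 ⟨(Finset.mem_inter.1 hj).1, hjC⟩
              · intro j hj
                exact Finset.mem_inter.2 ⟨(Finset.mem_inter.1 hj).1, hsub (Finset.mem_inter.1 hj).2⟩
            rw [hint, hBP'P]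
            simp
          · have hPC' : P ⊂ C := Finset.ssubset_iff_subset_ne.2 ⟨hPC, Ne.symm hCPeq⟩
            have hle := hminF C hPC' hgC
            have hdenC : (0:ℝ) < (C.card : ℝ) - (P.card : ℝ) := by
              have : (P.card:ℝ) < (C.card:ℝ) := by exact_mod_cast Finset.card_lt_card hPC'
              linarith
            have h2 : ρ * ((C.card : ℝ) - (P.card : ℝ)) ≤ (g a C : ℝ) - (g a P : ℝ) := by
              have := hle
              rw [hρ, hratio] at this ⊢
              rw [div_le_div_iff₀ hdb' hdenC] at this
              nlinarith [this]
            rw [← hCcard]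
            nlinarith [h2, hsubmodR]
        calc ((B ∩ (P' \ P)).card : ℝ) * ρ + ∑ j ∈ B \ P', ω' j ≤
            ((g a (B ∩ P') : ℝ) - (g a (B ∩ P) : ℝ)) +
              ((g a B : ℝ) - (g a (B ∩ P') : ℝ)) := add_le_add hbound1 hbound2
          _ = (g a B : ℝ) - (g a (B ∩ P) : ℝ) := by ring
    · -- stop case
      push_neg at hex
      apply stop_lemma a hkn hq hgen P hgP
      intro B hPB hgB
      exact hex B hPB hgB


end NochkaAux

open NochkaAux in
/-- Nochka's theorem (existence of Nochka weights): let `1 ≤ k ≤ n`,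
`q > 2n − k + 1`, and let `a₁, …, a_q ∈ ℂ^{k+1}∖{0}` be in `n`-subgeneral
position (every `n+1` of them span `ℂ^{k+1}`). Then there exist `ϖ(j)` and
`θ > 0` with: (i) `0 < ϖ(j)θ ≤ 1`; (ii) `q − 2n + k − 1 = θ(Σϖ(j) − (k+1))`;
(iii) `1 ≤ (n+1)/(k+1) ≤ θ ≤ (2n−k+1)/(k+1)`; (iv) `Σ_{j∈B}ϖ(j) ≤
dim span{a_j : j∈B}` for every `B` with `#B ≤ n+1`. -/
theorem nochka_weights_exist (k n q : ℕ) (hk : 1 ≤ k) (hkn : k ≤ n)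
    (hq : 2 * n - k + 1 < q)
    (a : Fin q → (Fin (k + 1) → ℂ)) (ha : ∀ j, a j ≠ 0)
    (hgen : ∀ B : Finset (Fin q), B.card = n + 1 →
      Submodule.span ℂ (a '' ↑B) = ⊤) :
    ∃ (ϖ : Fin q → ℝ) (θ : ℝ), 0 < θ ∧
      (∀ j, 0 < ϖ j * θ ∧ ϖ j * θ ≤ 1) ∧
      ((q : ℝ) - 2 * n + k - 1 = θ * (∑ j, ϖ j - ((k : ℝ) + 1))) ∧
      (1 ≤ ((n : ℝ) + 1) / ((k : ℝ) + 1) ∧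
        ((n : ℝ) + 1) / ((k : ℝ) + 1) ≤ θ ∧
        θ ≤ (2 * (n : ℝ) - k + 1) / ((k : ℝ) + 1)) ∧
      (∀ B : Finset (Fin q), B.card ≤ n + 1 →
        ∑ j ∈ B, ϖ j ≤ (Module.finrank ℂ (Submodule.span ℂ (a '' ↑B)) : ℝ)) := by

  obtain ⟨ω, c, h1, h2, h3, h4, h5⟩ := rec_main a hkn hq hgen n ∅ (by simp)
    (by rw [g_empty]; omega)
    (by
      intro B hB hgB
      rw [g_empty]
      exact g_pos a ha (Finset.empty_ssubset.1 hB))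
  rw [g_empty] at h1 h4
  simp only [Finset.card_empty, Nat.cast_zero, Nat.cast_ofNat] at h1 h4
  -- positivity facts
  have hknR : (k:ℝ) ≤ (n:ℝ) := by exact_mod_cast hkn
  have hkR : (1:ℝ) ≤ (k:ℝ) := by exact_mod_cast hk
  have hK : (0:ℝ) < (k:ℝ) + 1 := by linarith
  have hN : (0:ℝ) < (n:ℝ) + 1 := by linarith
  have hM : (0:ℝ) < 2*(n:ℝ) - (k:ℝ) + 1 := by linarith
  have hq1 : 1 ≤ q := by omega
  have hc : (0:ℝ) < c := by
    have := h3 ⟨0, by omega⟩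
    linarith [this.1, this.2]
  have hcm : (k:ℝ) + 1 ≤ c * (2*(n:ℝ) - (k:ℝ) + 1) := by
    have h1' : ((k:ℝ) + 1 - 0) / (2*(n:ℝ) - (k:ℝ) + 1 - 0) ≤ c := h1
    rw [sub_zero, sub_zero, div_le_iff₀ hM] at h1'
    linarith
  have hcn : c * ((n:ℝ) + 1) ≤ (k:ℝ) + 1 := by
    rw [le_div_iff₀ hN] at h2
    exact h2
  refine ⟨ω, 1/c, by positivity, ?_, ?_, ⟨?_, ?_, ?_⟩, ?_⟩
  · intro j
    constructor
    · have := (h3 j).1; positivity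
    · rw [mul_one_div, div_le_one hc]; exact (h3 j).2
  · have hSum : ∑ j, ω j = ((k:ℝ) + 1 - 0) + c * ((q:ℝ) - (2*(n:ℝ) - (k:ℝ) + 1)) := by
      rw [← h4, ← Finset.compl_empty]
    rw [hSum]
    field_simp
    ring
  · rw [le_div_iff₀ hK]; linarith
  · rw [div_le_div_iff₀ hK hc]
    linarith [hcn]
  · rw [div_le_div_iff₀ hc hK]
    linarith [hcm]
  · intro B hB
    show ∑ j ∈ B, ω j ≤ (g a B : ℝ)
    rcases le_or_gt (g a B) k with hgB | hgB
    · have := h5 B hgB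
      rw [Finset.sdiff_empty, Finset.inter_empty, g_empty] at this
      simpa using this
    · have hgBR : (k:ℝ) + 1 ≤ (g a B : ℝ) := by exact_mod_cast hgB
      have hsum : ∑ j ∈ B, ω j ≤ (B.card : ℝ) * c := by
        calc ∑ j ∈ B, ω j ≤ ∑ j ∈ B, c := Finset.sum_le_sum (fun j _ => (h3 j).2)
          _ = (B.card : ℝ) * c := by rw [Finset.sum_const, nsmul_eq_mul]
      have hcard : (B.card : ℝ) ≤ (n:ℝ) + 1 := by exact_mod_cast hB
      calc ∑ j ∈ B, ω j ≤ (B.card : ℝ) * c := hsum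
        _ ≤ ((n:ℝ) + 1) * c := by nlinarith
        _ ≤ (k:ℝ) + 1 := by linarith [hcn]
        _ ≤ (g a B : ℝ) := hgBR
end

section
/- Let U ⊆ ℂ be a connected open set and f₀, …, f_k : U → ℂ holomorphic functions, linearly independent over ℂ and without common zeros. Let k ≤ n, q > 2n − k + 1, and let a₁, …, a_q ∈ ℂ^{k+1}∖{0} be in n-subgeneral position (every n + 1 of them span ℂ^{k+1}). Let ϖ(1), …, ϖ(q) ∈ (0, 1] satisfy: for every B ⊆ {1, …, q} with #B ≤ n + 1, Σ_{j∈B}ϖ(j) ≤ dim_ℂ span{a_j : j ∈ B}. Set F_j := Σ_{t=0}^k a_{j,t} f_t and let W := det((d/dz)^s f_t)_{0≤s,t≤k} be the Wronskian of f₀, …, f_k. Then W ≢ 0, each F_j ≢ 0, and at every point z₀ ∈ U the vanishing orders satisfy ord_{z₀}(W) ≥ Σ_{j=1}^q ϖ(j)·max(ord_{z₀}(F_j) − k, 0). (Equivalently, ν_D + Σ_j ϖ(j)·min(ν_{F_j}, k) ≥ 0 for D = W/∏_j F_j^{ϖ(j)}.) -/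
open Classical

open Filter Topology

noncomputable section

/-- `g` vanishes to order at least `m` at `z₀`, witnessed analytically. -/
def ordGe (g : ℂ → ℂ) (z₀ : ℂ) (m : ℕ) : Prop :=
  ∃ h : ℂ → ℂ, AnalyticAt ℂ h z₀ ∧ ∀ᶠ z in 𝓝 z₀, g z = (z - z₀) ^ m * h z

lemma ordGe.congr {g g' : ℂ → ℂ} {z₀ : ℂ} {m : ℕ} (h : ordGe g z₀ m)
    (he : ∀ᶠ z in 𝓝 z₀, g' z = g z) : ordGe g' z₀ m := by
  obtain ⟨u, hu, heq⟩ := h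
  exact ⟨u, hu, he.mp (heq.mono fun z h1 h2 => h2.trans h1)⟩

lemma ordGe.analyticAt {g : ℂ → ℂ} {z₀ : ℂ} {m : ℕ} (h : ordGe g z₀ m) :
    AnalyticAt ℂ g z₀ := by
  obtain ⟨u, hu, heq⟩ := h
  have : AnalyticAt ℂ (fun z => (z - z₀) ^ m * u z) z₀ :=
    (((analyticAt_id).sub analyticAt_const).pow m).mul hu
  exact this.congr (Filter.EventuallyEq.symm (heq.mono fun z h => h))

lemma ordGe_of_analyticAt {g : ℂ → ℂ} {z₀ : ℂ} (h : AnalyticAt ℂ g z₀) :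
    ordGe g z₀ 0 := ⟨g, h, by simp⟩

lemma ordGe.mono {g : ℂ → ℂ} {z₀ : ℂ} {m m' : ℕ} (h : ordGe g z₀ m) (hm : m' ≤ m) :
    ordGe g z₀ m' := by
  obtain ⟨u, hu, heq⟩ := h
  refine ⟨fun z => (z - z₀) ^ (m - m') * u z,
    (((analyticAt_id).sub analyticAt_const).pow _).mul hu, heq.mono fun z h => ?_⟩
  rw [h, ← mul_assoc, ← pow_add, Nat.add_sub_cancel' hm]

lemma ordGe.mul {g₁ g₂ : ℂ → ℂ} {z₀ : ℂ} {m₁ m₂ : ℕ} (h₁ : ordGe g₁ z₀ m₁)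
    (h₂ : ordGe g₂ z₀ m₂) : ordGe (fun z => g₁ z * g₂ z) z₀ (m₁ + m₂) := by
  obtain ⟨u₁, hu₁, he₁⟩ := h₁
  obtain ⟨u₂, hu₂, he₂⟩ := h₂
  refine ⟨fun z => u₁ z * u₂ z, hu₁.mul hu₂, he₁.mp (he₂.mono fun z e2 e1 => ?_)⟩
  show g₁ z * g₂ z = _
  rw [e1, e2, pow_add]; ring

lemma ordGe.add {g₁ g₂ : ℂ → ℂ} {z₀ : ℂ} {m : ℕ} (h₁ : ordGe g₁ z₀ m)
    (h₂ : ordGe g₂ z₀ m) : ordGe (fun z => g₁ z + g₂ z) z₀ m := by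
  obtain ⟨u₁, hu₁, he₁⟩ := h₁
  obtain ⟨u₂, hu₂, he₂⟩ := h₂
  refine ⟨fun z => u₁ z + u₂ z, hu₁.add hu₂, he₁.mp (he₂.mono fun z e2 e1 => ?_)⟩
  show g₁ z + g₂ z = _
  rw [e1, e2]; ring

lemma ordGe.const_mul {g : ℂ → ℂ} {z₀ : ℂ} {m : ℕ} (c : ℂ) (h : ordGe g z₀ m) :
    ordGe (fun z => c * g z) z₀ m := by
  obtain ⟨u, hu, he⟩ := h
  exact ⟨fun z => c * u z, analyticAt_const.mul hu, he.mono fun z e => by show c * g z = _; rw [e]; ring⟩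

lemma ordGe_sum {ι : Type*} (s : Finset ι) (g : ι → ℂ → ℂ) {z₀ : ℂ} {m : ℕ}
    (h : ∀ i ∈ s, ordGe (g i) z₀ m) :
    ordGe (fun z => ∑ i ∈ s, g i z) z₀ m := by
  classical
  induction s using Finset.induction with
  | empty =>
    exact ⟨fun _ => 0, analyticAt_const, by simp⟩
  | insert i s' hni ih =>
    simp only [Finset.sum_insert hni]
    exact (h i (Finset.mem_insert_self i s')).add
      (ih fun j hj => h j (Finset.mem_insert_of_mem hj))

lemma ordGe_prod {ι : Type*} (s : Finset ι) (g : ι → ℂ → ℂ) {z₀ : ℂ} (m : ι → ℕ)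
    (h : ∀ i ∈ s, ordGe (g i) z₀ (m i)) :
    ordGe (fun z => ∏ i ∈ s, g i z) z₀ (∑ i ∈ s, m i) := by
  classical
  induction s using Finset.induction with
  | empty =>
    simpa using ordGe_of_analyticAt (g := fun _ : ℂ => (1:ℂ)) analyticAt_const
  | insert i s' hni ih =>
    simp only [Finset.prod_insert hni, Finset.sum_insert hni]
    exact (h i (Finset.mem_insert_self i s')).mul
      (ih fun j hj => h j (Finset.mem_insert_of_mem hj))

lemma ordGe_det {r : ℕ} (M : Fin r → Fin r → ℂ → ℂ) {z₀ : ℂ} (c : Fin r → ℕ)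
    (h : ∀ s t, ordGe (M s t) z₀ (c t)) :
    ordGe (fun z => Matrix.det (Matrix.of fun s t => M s t z)) z₀ (∑ t, c t) := by
  have : ∀ z, Matrix.det (Matrix.of fun s t => M s t z)
      = ∑ σ : Equiv.Perm (Fin r), ((Equiv.Perm.sign σ : ℤ) : ℂ) * ∏ i, M (σ i) i z := by
    intro z; rw [Matrix.det_apply]
    exact Finset.sum_congr rfl fun σ _ => by simp [Units.smul_def, zsmul_eq_mul]
  refine ordGe.congr (ordGe_sum Finset.univ _ fun σ _ => ?_)
    (Filter.Eventually.of_forall fun z => (this z))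
  exact ordGe.const_mul _ (ordGe_prod Finset.univ _ c fun i _ => h (σ i) i)

lemma ordGe.deriv {g : ℂ → ℂ} {z₀ : ℂ} {m : ℕ} (h : ordGe g z₀ (m + 1)) :
    ordGe (_root_.deriv g) z₀ m := by
  obtain ⟨u, hu, he⟩ := h
  obtain ⟨V, hV1, hV2⟩ := hu.exists_mem_nhds_analyticOnNhd
  refine ⟨fun z => ((m : ℂ) + 1) * u z + (z - z₀) * _root_.deriv u z,
    (analyticAt_const.mul hu).add ((analyticAt_id.sub analyticAt_const).mul
      (by
        obtain ⟨W, hW1, hW2⟩ := hu.exists_mem_nhds_analyticOnNhd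
        obtain ⟨t, htW, hto, hzt⟩ := mem_nhds_iff.mp hW1
        exact (hW2.mono htW).deriv_of_isOpen hto z₀ hzt)), ?_⟩
  have hder : ∀ᶠ z in 𝓝 z₀, _root_.deriv g z
      = _root_.deriv (fun z => (z - z₀) ^ (m+1) * u z) z := by
    filter_upwards [eventually_eventually_nhds.mpr he] with z hz
    exact Filter.EventuallyEq.deriv_eq hz
  obtain ⟨t, htW, hto, hzt⟩ := mem_nhds_iff.mp hV1
  have hop : ∀ᶠ z in 𝓝 z₀, z ∈ t := hto.mem_nhds hzt
  filter_upwards [hder, hop] with z hz hzt'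
  rw [hz]
  have hdu : DifferentiableAt ℂ u z := ((hV2.mono htW) z hzt').differentiableAt
  rw [deriv_fun_mul (by fun_prop) hdu]
  have : _root_.deriv (fun z => (z - z₀) ^ (m+1)) z = ((m:ℂ)+1) * (z - z₀) ^ m := by
    have : (fun z : ℂ => (z - z₀) ^ (m+1)) = fun z => (z - z₀) ^ (m+1) := rfl
    rw [show (fun z : ℂ => (z - z₀) ^ (m+1)) = (fun w : ℂ => w ^ (m+1)) ∘ (fun z => z - z₀)
      from rfl]
    rw [deriv_comp _ (by fun_prop) (by fun_prop)]
    simp [deriv_pow]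
  rw [this, pow_succ]
  ring

lemma ordGe.iteratedDeriv {g : ℂ → ℂ} {z₀ : ℂ} {m : ℕ} (h : ordGe g z₀ m) (s : ℕ) :
    ordGe (iteratedDeriv s g) z₀ (m - s) := by
  induction s generalizing g m with
  | zero => simpa using h
  | succ s ih =>
    rw [iteratedDeriv_succ']
    rcases Nat.eq_zero_or_pos m with hm | hm
    · subst hm
      simpa using ih (ordGe_of_analyticAt (by
        obtain ⟨V, hV1, hV2⟩ := h.analyticAt.exists_mem_nhds_analyticOnNhd
        obtain ⟨t, htW, hto, hzt⟩ := mem_nhds_iff.mp hV1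
        exact (hV2.mono htW).deriv_of_isOpen hto z₀ hzt))
    · obtain ⟨m', hm'⟩ : ∃ m', m = m' + 1 := ⟨m - 1, by omega⟩
      have hd : ordGe (_root_.deriv g) z₀ m' := by
        have : ordGe g z₀ (m' + 1) := by rwa [show m' + 1 = m from by omega]
        exact this.deriv
      have := ih hd
      rwa [show m - (s+1) = m' - s from by omega]

end

section stage2

open Finset

lemma AnalyticOnNhd.iteratedDeriv' {V : Set ℂ} (hV : IsOpen V) {g : ℂ → ℂ}
    (hg : AnalyticOnNhd ℂ g V) (n : ℕ) : AnalyticOnNhd ℂ (iteratedDeriv n g) V := by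
  induction n with
  | zero => simpa [iteratedDeriv_zero]
  | succ n ih => rw [iteratedDeriv_succ]; exact ih.deriv_of_isOpen hV

lemma iteratedDeriv_comb {V : Set ℂ} (hV : IsOpen V) {ι : Type*} [Fintype ι]
    (f : ι → ℂ → ℂ) (hf : ∀ i, AnalyticOnNhd ℂ (f i) V) (c : ι → ℂ) (n : ℕ) :
    ∀ z ∈ V, iteratedDeriv n (fun w => ∑ i, c i * f i w) z
      = ∑ i, c i * iteratedDeriv n (f i) z := by
  induction n with
  | zero => simp
  | succ n ih =>
    intro z hz
    rw [iteratedDeriv_succ]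
    have he : (iteratedDeriv n fun w => ∑ i, c i * f i w)
        =ᶠ[𝓝 z] fun w => ∑ i, c i * iteratedDeriv n (f i) w := by
      filter_upwards [hV.mem_nhds hz] with w hw using ih w hw
    rw [he.deriv_eq, deriv_fun_sum (A := fun i w => c i * iteratedDeriv n (f i) w) fun i _ => (analyticAt_const.mul
      (((hf i).iteratedDeriv' hV n) z hz)).differentiableAt]
    simp only [iteratedDeriv_succ]
    exact Finset.sum_congr rfl fun i _ => deriv_const_mul _
      (((hf i).iteratedDeriv' hV n) z hz).differentiableAt

lemma iteratedDeriv_leibniz {V : Set ℂ} (hV : IsOpen V) {f g : ℂ → ℂ}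
    (hf : AnalyticOnNhd ℂ f V) (hg : AnalyticOnNhd ℂ g V) (n : ℕ) :
    ∀ z ∈ V, iteratedDeriv n (fun w => f w * g w) z
      = ∑ i ∈ range (n+1), (n.choose i : ℂ) * iteratedDeriv i f z
          * iteratedDeriv (n - i) g z := by
  induction n with
  | zero => simp
  | succ n ih =>
    intro z hz
    rw [iteratedDeriv_succ]
    have he : (iteratedDeriv n fun w => f w * g w) =ᶠ[𝓝 z]
        fun w => ∑ i ∈ range (n+1), (n.choose i : ℂ) * iteratedDeriv i f w
          * iteratedDeriv (n - i) g w := by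
      filter_upwards [hV.mem_nhds hz] with w hw using ih w hw
    have hdf : ∀ m, DifferentiableAt ℂ (iteratedDeriv m f) z :=
      fun m => ((hf.iteratedDeriv' hV m) z hz).differentiableAt
    have hdg : ∀ m, DifferentiableAt ℂ (iteratedDeriv m g) z :=
      fun m => ((hg.iteratedDeriv' hV m) z hz).differentiableAt
    rw [he.deriv_eq, deriv_fun_sum (A := fun i w => (n.choose i : ℂ) * iteratedDeriv i f w * iteratedDeriv (n - i) g w) fun i _ => (((differentiableAt_const _).mul (hdf i)).mul (hdg _))]
    have step : ∀ i ∈ range (n+1),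
        deriv (fun w => (n.choose i : ℂ) * iteratedDeriv i f w * iteratedDeriv (n - i) g w) z
        = (n.choose i : ℂ) * (iteratedDeriv (i+1) f z * iteratedDeriv (n-i) g z
            + iteratedDeriv i f z * iteratedDeriv (n-i+1) g z) := by
      intro i _
      rw [deriv_fun_mul (c := fun w => (n.choose i : ℂ) * iteratedDeriv i f w) ((differentiableAt_const _).mul (hdf i)) (hdg _),
        deriv_const_mul _ (hdf i), ← iteratedDeriv_succ, ← iteratedDeriv_succ]
      ring
    rw [Finset.sum_congr rfl step]
    simp only [mul_add, Finset.sum_add_distrib]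
    -- now combine via Pascal
    have key : ∑ i ∈ range (n+2), ((n+1).choose i : ℂ) * iteratedDeriv i f z
          * iteratedDeriv (n + 1 - i) g z
        = ∑ i ∈ range (n+1), (n.choose i : ℂ) * (iteratedDeriv (i+1) f z
            * iteratedDeriv (n-i) g z)
        + ∑ i ∈ range (n+1), (n.choose i : ℂ) * (iteratedDeriv i f z
            * iteratedDeriv (n-i+1) g z) := by
      rw [Finset.sum_range_succ' (fun i => ((n+1).choose i : ℂ) * iteratedDeriv i f z
          * iteratedDeriv (n + 1 - i) g z)]
      have expand : ∀ i ∈ range (n+1), ((n+1).choose (i+1) : ℂ) * iteratedDeriv (i+1) f z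
          * iteratedDeriv (n + 1 - (i+1)) g z
          = (n.choose i : ℂ) * (iteratedDeriv (i+1) f z * iteratedDeriv (n-i) g z)
            + (n.choose (i+1) : ℂ) * (iteratedDeriv (i+1) f z
              * iteratedDeriv (n - i) g z) := by
        intro i _
        rw [Nat.choose_succ_succ, show n + 1 - (i+1) = n - i from by omega]
        push_cast
        ring
      rw [Finset.sum_congr rfl expand, Finset.sum_add_distrib]
      have shift : ∑ i ∈ range (n+1), (n.choose (i+1) : ℂ) * (iteratedDeriv (i+1) f z
            * iteratedDeriv (n - i) g z)
          = ∑ i ∈ range (n+1), (n.choose i : ℂ) * (iteratedDeriv i f z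
            * iteratedDeriv (n-i+1) g z) - iteratedDeriv 0 f z * iteratedDeriv (n+1) g z := by
        have : ∑ i ∈ range (n+2), (n.choose i : ℂ) * (iteratedDeriv i f z
            * iteratedDeriv (n+1-i) g z)
            = ∑ i ∈ range (n+1), (n.choose i : ℂ) * (iteratedDeriv i f z
            * iteratedDeriv (n-i+1) g z) := by
          rw [Finset.sum_range_succ]
          simp only [Nat.choose_succ_self, Nat.cast_zero, zero_mul, add_zero]
          refine Finset.sum_congr rfl fun i hi => ?_
          have hi' : i ≤ n := Nat.lt_succ_iff.mp (Finset.mem_range.mp hi)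
          rw [show n + 1 - i = n - i + 1 from by omega]
        rw [← this, Finset.sum_range_succ' (fun i => (n.choose i : ℂ) * (iteratedDeriv i f z
            * iteratedDeriv (n+1-i) g z))]
        simp
      rw [shift]
      simp only [Nat.choose_zero_right, Nat.cast_one, one_mul, Nat.sub_zero,
        iteratedDeriv_zero]
      ring
    rw [key]

lemma iteratedDeriv_const_fun (c : ℂ) (n : ℕ) :
    iteratedDeriv n (fun _ : ℂ => c) = fun _ => if n = 0 then c else 0 := by
  induction n with
  | zero => simp
  | succ n ih =>
    rw [iteratedDeriv_succ, ih]
    funext z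
    rcases Nat.eq_zero_or_pos n with h | h
    · simp [h]
    · simp [Nat.pos_iff_ne_zero.mp h]

end stage2

section stage3

open Finset

lemma wronskian_factor {k : ℕ} {V : Set ℂ} (hV : IsOpen V) (f : Fin (k+2) → ℂ → ℂ)
    (hf : ∀ t, AnalyticOnNhd ℂ (f t) V) (h0 : ∀ z ∈ V, f 0 z ≠ 0) :
    ∀ z ∈ V,
      Matrix.det (Matrix.of fun s t : Fin (k+2) => iteratedDeriv s.1 (f t) z)
        = (f 0 z)^(k+2) * Matrix.det (Matrix.of fun s t : Fin (k+1) =>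
            iteratedDeriv s.1 (deriv (fun w => f t.succ w / f 0 w)) z) := by
  intro z hz
  set G : Fin (k+2) → ℂ → ℂ :=
    fun t => Fin.cases (fun _ => (1:ℂ)) (fun t' w => f t'.succ w / f 0 w) t with hG
  have hGa : ∀ t, AnalyticOnNhd ℂ (G t) V := by
    intro t
    induction t using Fin.cases with
    | zero => exact fun z hz => analyticAt_const
    | succ t' => exact fun z hz => ((hf t'.succ z hz).div (hf 0 z hz) (h0 z hz))
  have hfG : ∀ t : Fin (k+2), Set.EqOn (f t) (fun w => G t w * f 0 w) V := by
    intro t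
    induction t using Fin.cases with
    | zero => intro w hw; simp [hG]
    | succ t' =>
      intro w hw
      simp only [hG, Fin.cases_succ]
      rw [div_mul_cancel₀ _ (h0 w hw)]
  have hM : (Matrix.of fun s t : Fin (k+2) => iteratedDeriv s.1 (f t) z)
      = (Matrix.of fun s j : Fin (k+2) => if (j:ℕ) ≤ (s:ℕ)
            then ((s.1).choose j.1 : ℂ) * iteratedDeriv (s.1 - j.1) (f 0) z else 0)
        * (Matrix.of fun j t : Fin (k+2) => iteratedDeriv j.1 (G t) z) := by
    ext s t
    rw [Matrix.mul_apply]
    simp only [Matrix.of_apply]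
    rw [(hfG t).iteratedDeriv_of_isOpen hV s.1 hz,
      iteratedDeriv_leibniz hV (hGa t) (hf 0) s.1 z hz]
    rw [Fin.sum_univ_eq_sum_range (fun j => (if j ≤ (s:ℕ)
        then ((s.1).choose j : ℂ) * iteratedDeriv (s.1 - j) (f 0) z else 0)
        * iteratedDeriv j (G t) z) (k+2)]
    rw [show ∑ j ∈ range (k+2), (if j ≤ (s:ℕ)
        then ((s.1).choose j : ℂ) * iteratedDeriv (s.1 - j) (f 0) z else 0)
        * iteratedDeriv j (G t) z
      = ∑ j ∈ range (s.1+1), (if j ≤ (s:ℕ)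
        then ((s.1).choose j : ℂ) * iteratedDeriv (s.1 - j) (f 0) z else 0)
        * iteratedDeriv j (G t) z from
      (Finset.sum_subset (by intro x hx; simp only [Finset.mem_range] at *; omega)
        (fun x _ hnx => by
          rw [if_neg (by simp only [Finset.mem_range] at hnx; omega), zero_mul])).symm]
    refine Finset.sum_congr rfl fun j hj => ?_
    rw [if_pos (by simp only [Finset.mem_range] at hj; omega)]
    ring
  rw [hM, Matrix.det_mul]
  have hL : Matrix.det (Matrix.of fun s j : Fin (k+2) => if (j:ℕ) ≤ (s:ℕ)
        then ((s.1).choose j.1 : ℂ) * iteratedDeriv (s.1 - j.1) (f 0) z else 0)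
      = (f 0 z)^(k+2) := by
    rw [Matrix.det_of_lowerTriangular _ (by
      intro i j hij
      simp only [Matrix.of_apply]
      rw [if_neg]
      have : (i:ℕ) < (j:ℕ) := hij
      omega)]
    have : ∀ i : Fin (k+2), (Matrix.of fun s j : Fin (k+2) => if (j:ℕ) ≤ (s:ℕ)
        then ((s.1).choose j.1 : ℂ) * iteratedDeriv (s.1 - j.1) (f 0) z else 0) i i
        = f 0 z := by
      intro i
      simp only [Matrix.of_apply, if_pos le_rfl, Nat.choose_self, Nat.sub_self,
        Nat.cast_one, one_mul, iteratedDeriv_zero]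
    rw [Finset.prod_congr rfl fun i _ => this i, Finset.prod_const]
    simp
  rw [hL]
  congr 1
  -- det M_G = det M_h
  rw [Matrix.det_succ_column_zero]
  have hcol0 : ∀ i : Fin (k+1),
      (Matrix.of fun j t : Fin (k+2) => iteratedDeriv j.1 (G t) z) i.succ 0 = 0 := by
    intro i
    simp only [Matrix.of_apply]
    have hG0 : G 0 = fun _ : ℂ => (1:ℂ) := rfl
    rw [hG0, iteratedDeriv_const_fun]
    simp [Fin.val_succ]
  rw [Fin.sum_univ_succ]
  rw [Finset.sum_eq_zero fun i _ => by rw [hcol0 i]; ring]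
  have hA00 : (Matrix.of fun j t : Fin (k+2) => iteratedDeriv j.1 (G t) z) 0 0 = 1 := by
    have hG0 : G 0 = fun _ : ℂ => (1:ℂ) := rfl
    simp only [Matrix.of_apply]
    rw [hG0, iteratedDeriv_const_fun]
    simp
  rw [hA00]
  simp only [Fin.val_zero, pow_zero, one_mul, mul_one, add_zero]
  congr 1
  ext s t
  simp only [Matrix.submatrix_apply, Matrix.of_apply, Fin.zero_succAbove]
  have : G t.succ = fun w => f t.succ w / f 0 w := by simp [hG]
  rw [this, Fin.val_succ, iteratedDeriv_succ']

lemma wronskian_aux : ∀ (k : ℕ) (U : Set ℂ), IsOpen U → IsPreconnected U →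
    ∀ (f : Fin (k+1) → ℂ → ℂ), (∀ t, AnalyticOnNhd ℂ (f t) U) →
    (∀ z ∈ U, Matrix.det (Matrix.of fun s t : Fin (k+1) => iteratedDeriv s.1 (f t) z) = 0) →
    ∃ c : Fin (k+1) → ℂ, c ≠ 0 ∧ ∀ z ∈ U, ∑ t, c t * f t z = 0 := by
  intro k
  induction k with
  | zero =>
    intro U hUo hUc f hf hdet
    refine ⟨fun _ => 1, by
      intro h; exact one_ne_zero (congrFun h 0), fun z hz => ?_⟩
    have := hdet z hz
    rw [Matrix.det_fin_one] at this
    simpa using this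
  | succ k ih =>
    intro U hUo hUc f hf hdet
    by_cases h0 : ∀ z ∈ U, f 0 z = 0
    · refine ⟨fun i => if i = 0 then 1 else 0, by
        intro h
        have := congrFun h 0
        simp at this, fun z hz => ?_⟩
      rw [Fin.sum_univ_succ]
      simp [h0 z hz, Fin.succ_ne_zero]
    · push_neg at h0
      obtain ⟨zs, hzsU, hzs⟩ := h0
      -- find a ball around zs inside U where f 0 ≠ 0
      have hcont : ContinuousAt (f 0) zs := (hf 0 zs hzsU).continuousAt
      have hne : ∀ᶠ w in 𝓝 zs, f 0 w ≠ 0 := hcont.eventually_ne hzs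
      obtain ⟨ε, hε, hball⟩ := Metric.mem_nhds_iff.mp
        (Filter.inter_mem (hUo.mem_nhds hzsU) hne)
      set V : Set ℂ := Metric.ball zs ε with hVdef
      have hVU : V ⊆ U := fun w hw => (hball hw).1
      have hVne : ∀ w ∈ V, f 0 w ≠ 0 := fun w hw => (hball hw).2
      have hVo : IsOpen V := Metric.isOpen_ball
      have hVc : IsPreconnected V := (convex_ball zs ε).isPreconnected
      set g : Fin (k+1) → ℂ → ℂ := fun t w => f t.succ w / f 0 w with hgdef
      set h : Fin (k+1) → ℂ → ℂ := fun t => deriv (g t) with hhdef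
      have hga : ∀ t, AnalyticOnNhd ℂ (g t) V := fun t w hw =>
        (hf t.succ w (hVU hw)).div (hf 0 w (hVU hw)) (hVne w hw)
      have hha : ∀ t, AnalyticOnNhd ℂ (h t) V := fun t => (hga t).deriv
      have hdet' : ∀ w ∈ V, Matrix.det (Matrix.of fun s t : Fin (k+1) =>
          iteratedDeriv s.1 (h t) w) = 0 := by
        intro w hw
        have := wronskian_factor hVo f (fun t => (hf t).mono hVU) hVne w hw
        rw [hdet w (hVU hw)] at this
        have hpow : (f 0 w)^(k+2) ≠ 0 := pow_ne_zero _ (hVne w hw)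
        replace this := mul_eq_zero.mp this.symm
        rcases this with h1 | h1
        · exact absurd h1 hpow
        · exact h1
      obtain ⟨c, hc0, hcrel⟩ := ih V hVo hVc h hha hdet'
      -- φ = ∑ c t * g t has zero derivative on V
      set φ : ℂ → ℂ := fun w => ∑ t, c t * g t w with hφdef
      have hφa : AnalyticOnNhd ℂ φ V := fun w hw =>
        Finset.analyticAt_fun_sum _ (fun t _ => analyticAt_const.mul (hga t w hw))
      have hφd : ∀ w ∈ V, deriv φ w = 0 := by
        intro w hw
        rw [hφdef]
        rw [deriv_fun_sum (A := fun t w => c t * g t w) fun t _ => (analyticAt_const.mul (hga t w hw)).differentiableAt]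
        rw [Finset.sum_congr rfl fun t _ =>
          deriv_const_mul (c t) ((hga t w hw)).differentiableAt]
        rw [← hcrel w hw]
      -- φ is constant on V
      have hconst : ∀ w ∈ V, φ w = φ zs := by
        intro w hw
        have hzsV : zs ∈ V := Metric.mem_ball_self hε
        refine (convex_ball zs ε).is_const_of_fderivWithin_eq_zero
          (hφa.differentiableOn) ?_ hw hzsV
        intro x hx
        rw [fderivWithin_of_isOpen hVo hx]
        have hdiff : DifferentiableAt ℂ φ x := (hφa x hx).differentiableAt
        have : HasDerivAt φ 0 x := by
          have := hdiff.hasDerivAt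
          rwa [hφd x hx] at this
        have := this.hasFDerivAt
        rw [this.fderiv]
        ext v
        simp
      -- multiply by f 0 : on V, ∑ c t * f t.succ = φ zs * f 0
      set c₀ : ℂ := φ zs with hc₀def
      have hrelV : ∀ w ∈ V, ∑ t, c t * f t.succ w = c₀ * f 0 w := by
        intro w hw
        have h1 : (∑ t, c t * g t w) * f 0 w = c₀ * f 0 w := by
          show φ w * f 0 w = _
          rw [hconst w hw]
        rw [← h1, Finset.sum_mul]
        refine Finset.sum_congr rfl fun t _ => ?_
        rw [hgdef]
        simp only []
        rw [mul_assoc, div_mul_cancel₀ _ (hVne w hw)]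
      -- extend to U by the identity principle
      have hrelU : ∀ w ∈ U, ∑ t, c t * f t.succ w - c₀ * f 0 w = 0 := by
        have hana : AnalyticOnNhd ℂ (fun w => ∑ t, c t * f t.succ w - c₀ * f 0 w) U :=
          fun w hw => ((Finset.analyticAt_fun_sum _ (fun t _ =>
            analyticAt_const.mul (hf t.succ w hw))).sub
            (analyticAt_const.mul (hf 0 w hw)))
        have hzsV : zs ∈ V := Metric.mem_ball_self hε
        have hev : (fun w => ∑ t, c t * f t.succ w - c₀ * f 0 w) =ᶠ[𝓝 zs] 0 := by
          filter_upwards [hVo.mem_nhds hzsV] with w hw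
          simp [hrelV w hw]
        exact fun w hw =>
          hana.eqOn_zero_of_preconnected_of_eventuallyEq_zero hUc hzsU hev hw
      refine ⟨Fin.cases (-c₀) c, ?_, ?_⟩
      · intro hcontra
        apply hc0
        funext t
        have := congrFun hcontra t.succ
        simpa using this
      · intro w hw
        rw [Fin.sum_univ_succ]
        simp only [Fin.cases_zero, Fin.cases_succ]
        have := hrelU w hw
        linear_combination this

end stage3

section stage4

open Finset Submodule

variable {q : ℕ} {K : Type*} [AddCommGroup K] [Module ℂ K]

lemma extend_indep (a : Fin q → K) :
    ∀ (nn : ℕ) (T' S : Finset (Fin q)), S.card - T'.card ≤ nn → T' ⊆ S →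
    Set.InjOn a ↑T' → LinearIndependent ℂ ((↑) : (a '' ↑T' : Set K) → K) →
    ∃ T : Finset (Fin q), T' ⊆ T ∧ T ⊆ S ∧ Set.InjOn a ↑T ∧
      LinearIndependent ℂ ((↑) : (a '' ↑T : Set K) → K) ∧
      Submodule.span ℂ (a '' ↑T) = Submodule.span ℂ (a '' ↑S) := by
  intro nn
  induction nn with
  | zero =>
    intro T' S hcard hsub hinj hli
    have : T' = S := Finset.eq_of_subset_of_card_le hsub (by omega)
    subst this
    exact ⟨T', subset_rfl, subset_rfl, hinj, hli, rfl⟩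
  | succ nn ih =>
    intro T' S hcard hsub hinj hli
    by_cases hsp : ∀ j ∈ S, a j ∈ Submodule.span ℂ (a '' ↑T')
    · refine ⟨T', subset_rfl, hsub, hinj, hli, le_antisymm
        (Submodule.span_mono (Set.image_mono (f := a) (by exact_mod_cast hsub)))
        (Submodule.span_le.mpr ?_)⟩
      rintro v ⟨j, hj, rfl⟩
      exact hsp j (by exact_mod_cast hj)
    · push_neg at hsp
      obtain ⟨j, hjS, hj⟩ := hsp
      have hjT' : j ∉ T' := fun hmem =>
        hj (Submodule.subset_span ⟨j, by exact_mod_cast hmem, rfl⟩)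
      have hinj' : Set.InjOn a ↑(insert j T') := by
        rw [Finset.coe_insert]
        intro x hx y hy hxy
        rcases Set.mem_insert_iff.mp hx with rfl | hx' <;>
          rcases Set.mem_insert_iff.mp hy with rfl | hy'
        · rfl
        · refine absurd (Submodule.subset_span ?_) hj
          exact ⟨y, hy', hxy.symm⟩
        · refine absurd (Submodule.subset_span ?_) hj
          exact ⟨x, hx', hxy⟩
        · exact hinj hx' hy' hxy
      have hli' : LinearIndependent ℂ ((↑) : (a '' ↑(insert j T') : Set K) → K) := by
        rw [Finset.coe_insert, Set.image_insert_eq]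
        exact LinearIndepOn.id_insert hli (fun hmem => hj hmem)
      have hcard' : S.card - (insert j T').card ≤ nn := by
        rw [Finset.card_insert_of_notMem hjT']
        have : T'.card < S.card := Finset.card_lt_card ⟨hsub, fun hss => hjT' (hss hjS)⟩
        omega
      obtain ⟨T, h1, h2, h3, h4, h5⟩ := ih (insert j T') S hcard'
        (Finset.insert_subset hjS hsub) hinj' hli'
      exact ⟨T, (Finset.subset_insert j T').trans h1, h2, h3, h4, h5⟩

lemma nochka_comb {a : Fin q → K} (ϖ : Fin q → ℝ) (m : Fin q → ℕ) (B : Finset (Fin q))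
    (hN : ∀ B' : Finset (Fin q), B' ⊆ B →
        ∑ j ∈ B', ϖ j ≤ (Module.finrank ℂ (Submodule.span ℂ (a '' ↑B')) : ℝ)) :
    ∃ T : Finset (Fin q), T ⊆ B ∧ Set.InjOn a ↑T ∧
      LinearIndependent ℂ ((↑) : (a '' ↑T : Set K) → K) ∧
      ∑ j ∈ B, ϖ j * (m j : ℝ) ≤ ∑ j ∈ T, (m j : ℝ) := by
  classical
  set L : ℕ := B.sup m with hL
  have hmL : ∀ j ∈ B, m j ≤ L := fun j hj => Finset.le_sup hj
  set Bl : ℕ → Finset (Fin q) := fun l => B.filter (fun j => l ≤ m j) with hBl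
  have hBlsub : ∀ l, Bl l ⊆ B := fun l => Finset.filter_subset _ _
  have hBlmono : ∀ {l l'}, l ≤ l' → Bl l' ⊆ Bl l := by
    intro l l' hll j hj
    simp only [hBl, Finset.mem_filter] at *
    exact ⟨hj.1, le_trans hll hj.2⟩
  have chain : ∀ i : ℕ, ∃ T : Finset (Fin q), T ⊆ Bl (L+1-i) ∧ Set.InjOn a ↑T ∧
      LinearIndependent ℂ ((↑) : (a '' ↑T : Set K) → K) ∧
      ∀ l, L+1-i ≤ l → Submodule.span ℂ (a '' ↑(T ∩ Bl l))
        = Submodule.span ℂ (a '' ↑(Bl l)) := by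
    intro i
    induction i with
    | zero =>
      refine ⟨∅, ?_, by simp [Set.InjOn], ?_, ?_⟩
      · exact Finset.empty_subset _
      · have he : a '' ↑(∅ : Finset (Fin q)) = (∅ : Set K) := by simp
        rw [he]
        exact linearIndependent_empty ℂ K
      · intro l hl
        have : Bl l = ∅ := by
          rw [Finset.eq_empty_iff_forall_notMem]
          intro j hj
          simp only [hBl, Finset.mem_filter] at hj
          have := hmL j hj.1
          omega
        rw [this, Finset.inter_empty]
    | succ i ihc =>
      obtain ⟨T', hT'sub, hT'inj, hT'li, hT'span⟩ := ihc
      have hsub2 : T' ⊆ Bl (L+1-(i+1)) := hT'sub.trans (hBlmono (by omega))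
      obtain ⟨T, h1, h2, h3, h4, h5⟩ := extend_indep a ((Bl (L+1-(i+1))).card)
        T' (Bl (L+1-(i+1))) (by omega) hsub2 hT'inj hT'li
      refine ⟨T, h2, h3, h4, ?_⟩
      intro l hl
      rcases eq_or_lt_of_le hl with rfl | hlt
      · rw [Finset.inter_eq_left.mpr h2]
        exact h5
      · have hll : L+1-i ≤ l := by omega
        refine le_antisymm (Submodule.span_mono (Set.image_mono (f := a)
          (by exact_mod_cast Finset.inter_subset_right))) ?_
        rw [← hT'span l hll]
        refine Submodule.span_mono (Set.image_mono (f := a) ?_)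
        exact_mod_cast Finset.inter_subset_inter h1 subset_rfl
  obtain ⟨T, hTsub, hTinj, hTli, hTspan⟩ := chain L
  have hT1 : T ⊆ Bl 1 := by simpa [show L+1-L = 1 from by omega] using hTsub
  have hTB : T ⊆ B := hT1.trans (hBlsub 1)
  refine ⟨T, hTB, hTinj, hTli, ?_⟩
  -- counting
  have count1 : ∑ j ∈ B, ϖ j * (m j : ℝ) = ∑ l ∈ Icc 1 L, ∑ j ∈ Bl l, ϖ j := by
    rw [Finset.sum_comm' (s := Icc 1 L) (t := Bl) (t' := B)
      (s' := fun j => (Icc 1 L).filter (fun l => l ≤ m j)) ?_]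
    · refine Finset.sum_congr rfl fun j hj => ?_
      have : (Icc 1 L).filter (fun l => l ≤ m j) = Icc 1 (m j) := by
        ext l
        simp only [Finset.mem_filter, Finset.mem_Icc]
        have := hmL j hj
        omega
      rw [this, Finset.sum_const, Nat.card_Icc]
      simp [mul_comm]
    · intro l j
      simp only [hBl, Finset.mem_filter, Finset.mem_Icc]
      tauto
  have count2 : ∀ l ∈ Icc 1 L, ∑ j ∈ Bl l, ϖ j
      ≤ ((T ∩ Bl l).card : ℝ) := by
    intro l hl
    refine (hN (Bl l) (hBlsub l)).trans ?_
    have hspan := hTspan l (by simp only [Finset.mem_Icc] at hl; omega)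
    rw [← hspan]
    have hinj' : Set.InjOn a ↑(T ∩ Bl l) :=
      hTinj.mono (by exact_mod_cast Finset.inter_subset_left)
    have hli' : LinearIndependent ℂ ((↑) : (a '' ↑(T ∩ Bl l) : Set K) → K) :=
      LinearIndepOn.mono (v := id) hTli (Set.image_mono (f := a) (by exact_mod_cast Finset.inter_subset_left))
    have himg : a '' ↑(T ∩ Bl l) = ↑((T ∩ Bl l).image a) := by
      rw [Finset.coe_image]
    rw [himg] at hli' ⊢
    rw [finrank_span_finset_eq_card hli', Finset.card_image_of_injOn hinj']
  have count3 : ∑ l ∈ Icc 1 L, ((T ∩ Bl l).card : ℝ) = ∑ j ∈ T, (m j : ℝ) := by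
    have : ∀ l, T ∩ Bl l = T.filter (fun j => l ≤ m j) := by
      intro l
      ext j
      simp only [hBl, Finset.mem_inter, Finset.mem_filter]
      constructor
      · rintro ⟨h1, h2, h3⟩; exact ⟨h1, h3⟩
      · rintro ⟨h1, h2⟩; exact ⟨h1, hTB h1, h2⟩
    have hc : ∀ l, (((T ∩ Bl l).card : ℕ) : ℝ) = ∑ j ∈ T, (if l ≤ m j then (1:ℝ) else 0) := by
      intro l
      rw [this l, Finset.card_filter, Nat.cast_sum]
      exact Finset.sum_congr rfl fun j _ => by split_ifs <;> simp
    rw [Finset.sum_congr rfl (fun l _ => hc l), Finset.sum_comm]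
    refine Finset.sum_congr rfl fun j hj => ?_
    have hjL := hmL j (hTB hj)
    have : ∀ l ∈ Icc 1 L, (if l ≤ m j then (1:ℝ) else 0) = if l ∈ Icc 1 (m j) then 1 else 0 := by
      intro l hl
      simp only [Finset.mem_Icc] at hl ⊢
      by_cases h : l ≤ m j <;> simp [h, hl.1]
    rw [Finset.sum_congr rfl this, Finset.sum_ite_mem, Finset.inter_eq_right.mpr
      (by intro l hl; simp only [Finset.mem_Icc] at *; omega), Finset.sum_const, Nat.card_Icc]
    simp
  calc ∑ j ∈ B, ϖ j * (m j : ℝ) = ∑ l ∈ Icc 1 L, ∑ j ∈ Bl l, ϖ j := count1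
    _ ≤ ∑ l ∈ Icc 1 L, ((T ∩ Bl l).card : ℝ) := Finset.sum_le_sum count2
    _ = ∑ j ∈ T, (m j : ℝ) := count3

end stage4

section stage5

open Filter Topology

lemma ordGe_le_order {g : ℂ → ℂ} {z₀ : ℂ} {M N : ℕ} (hg : AnalyticAt ℂ g z₀)
    (ho : analyticOrderAt g z₀ = (N : ℕ∞)) (h : ordGe g z₀ M) : M ≤ N := by
  by_contra hlt
  push_neg at hlt
  obtain ⟨u, hu, hu0, hueq⟩ := hg.analyticOrderAt_eq_natCast.mp ho
  obtain ⟨v, hv, hveq⟩ := h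
  have hev : ∀ᶠ z in 𝓝[≠] z₀, u z = (z - z₀) ^ (M - N) * v z := by
    have : ∀ᶠ z in 𝓝 z₀, (z - z₀) ^ N * u z = (z - z₀) ^ M * v z := by
      filter_upwards [hueq, hveq] with z h1 h2
      rw [← h2, h1, smul_eq_mul]
    rw [eventually_nhdsWithin_iff]
    filter_upwards [this] with z hz hne
    have hzne : (z - z₀) ≠ 0 := sub_ne_zero.mpr hne
    have : (z - z₀) ^ N * u z = (z - z₀) ^ N * ((z - z₀) ^ (M - N) * v z) := by
      rw [hz, ← mul_assoc, ← pow_add]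
      congr 2
      omega
    exact mul_left_cancel₀ (pow_ne_zero _ hzne) this
  have h1 : Tendsto u (𝓝[≠] z₀) (𝓝 (u z₀)) :=
    hu.continuousAt.tendsto.mono_left nhdsWithin_le_nhds
  have h2 : Tendsto (fun z => (z - z₀) ^ (M - N) * v z) (𝓝[≠] z₀) (𝓝 0) := by
    have hc : ContinuousAt (fun z => (z - z₀) ^ (M - N) * v z) z₀ :=
      (((continuousAt_id.sub continuousAt_const).pow _)).mul hv.continuousAt
    have hval : ((z₀ - z₀) ^ (M - N) * v z₀) = 0 := by
      rw [sub_self, zero_pow (by omega), zero_mul]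
    have hten : Tendsto (fun z => (z - z₀) ^ (M - N) * v z) (𝓝 z₀)
        (𝓝 ((z₀ - z₀) ^ (M - N) * v z₀)) := hc.tendsto
    rw [hval] at hten
    exact hten.mono_left nhdsWithin_le_nhds
  have := tendsto_nhds_unique (h1.congr' hev) h2
  exact hu0 this

lemma ordGe_of_order {g : ℂ → ℂ} {z₀ : ℂ} {N : ℕ} (hg : AnalyticAt ℂ g z₀)
    (ho : analyticOrderAt g z₀ = (N : ℕ∞)) : ordGe g z₀ N := by
  obtain ⟨u, hu, _, hueq⟩ := hg.analyticOrderAt_eq_natCast.mp ho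
  exact ⟨u, hu, hueq.mono fun z hz => by simpa [smul_eq_mul] using hz⟩

lemma exists_basis_matrix {k q : ℕ} (a : Fin q → (Fin (k+1) → ℂ)) (T : Finset (Fin q))
    (hinj : Set.InjOn a ↑T)
    (hli : LinearIndependent ℂ ((↑) : (a '' ↑T : Set (Fin (k+1) → ℂ)) → (Fin (k+1) → ℂ))) :
    ∃ (C : Matrix (Fin (k+1)) (Fin (k+1)) ℂ) (ι : Fin q → Fin (k+1)),
      C.det ≠ 0 ∧ Set.InjOn ι ↑T ∧ ∀ j ∈ T, (fun t => C (ι j) t) = a j := by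
  classical
  set s : Set (Fin (k+1) → ℂ) := a '' ↑T with hs
  replace hli : LinearIndepOn ℂ id s := hli
  let b := Module.Basis.extend hli
  haveI : Fintype ↥(LinearIndepOn.extend (v := id) hli (Set.subset_univ s)) := FiniteDimensional.fintypeBasisIndex b
  have hcard : Fintype.card ↥(LinearIndepOn.extend (v := id) hli (Set.subset_univ s)) = k + 1 := by
    have h1 := Module.finrank_eq_card_basis b
    have h2 : Module.finrank ℂ (Fin (k+1) → ℂ) = k + 1 := by
      rw [Module.finrank_fintype_fun_eq_card, Fintype.card_fin]
    omega
  let e := Fintype.equivFinOfCardEq hcard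
  let bB := b.reindex e
  refine ⟨Matrix.of fun i t => bB i t, fun j => if h : j ∈ T then
    e ⟨a j, LinearIndepOn.subset_extend (v := id) hli _ ⟨j, h, rfl⟩⟩ else 0, ?_, ?_, ?_⟩
  · have hmat : (Pi.basisFun ℂ (Fin (k+1))).toMatrix bB
        = (Matrix.of fun i t : Fin (k+1) => bB i t).transpose := by
      ext t i
      simp [Module.Basis.toMatrix_apply, Pi.basisFun_repr]
    have hmul := Module.Basis.toMatrix_mul_toMatrix_flip (Pi.basisFun ℂ (Fin (k+1))) bB
    have hdet : ((Pi.basisFun ℂ (Fin (k+1))).toMatrix bB).det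
        * (bB.toMatrix (Pi.basisFun ℂ (Fin (k+1)))).det = 1 := by
      rw [← Matrix.det_mul, hmul, Matrix.det_one]
    intro hzero
    rw [hmat, Matrix.det_transpose] at hdet
    rw [hzero, zero_mul] at hdet
    exact zero_ne_one hdet
  · intro x hx y hy hxy
    simp only [dif_pos (by exact_mod_cast hx : x ∈ T), dif_pos (by exact_mod_cast hy : y ∈ T)]
      at hxy
    have := congrArg (fun i => b (e.symm i)) hxy
    simp only [Equiv.symm_apply_apply] at this
    rw [Module.Basis.extend_apply_self, Module.Basis.extend_apply_self] at this
    exact hinj (by exact_mod_cast hx) (by exact_mod_cast hy) (by exact_mod_cast this)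
  · intro j hj
    funext t
    simp only [Matrix.of_apply, dif_pos hj]
    have : bB (e ⟨a j, LinearIndepOn.subset_extend (v := id) hli _ ⟨j, hj, rfl⟩⟩)
        = b ⟨a j, LinearIndepOn.subset_extend (v := id) hli _ ⟨j, hj, rfl⟩⟩ := by
      simp [bB, Module.Basis.reindex_apply, Equiv.symm_apply_apply]
    rw [this, Module.Basis.extend_apply_self]

end stage5


/-- The vanishing order of `g` at `z₀` (as an element of `ℕ∞`), defined via the
order of the analytic germ of `g` at `z₀` (junk value `0` if `g` is not
analytic at `z₀`). -/
noncomputable def ordAt (g : ℂ → ℂ) (z₀ : ℂ) : ℕ∞ :=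
  if h : AnalyticAt ℂ g z₀ then analyticOrderAt g z₀ else 0

/-- Nochka-weighted Wronskian estimate (Fujimoto's Lemma 3.2.13): for
holomorphic, linearly independent `f₀, …, f_k` without common zeros on a
connected open `U`, hyperplanes `a₁, …, a_q` in `n`-subgeneral position with
Nochka weights `ϖ(j)`, `F_j = Σ_t a_{j,t} f_t` and `W` the Wronskian of the
`f_t`, one has `W ≢ 0`, `F_j ≢ 0`, and at every `z₀ ∈ U`,
`ord_{z₀}(W) ≥ Σ_j ϖ(j)·max(ord_{z₀}(F_j) − k, 0)`. -/
theorem wronskian_nochka_estimate (U : Set ℂ) (hUopen : IsOpen U)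
    (hUconn : IsConnected U)
    (k n q : ℕ) (hkn : k ≤ n) (hq : 2 * n - k + 1 < q)
    (f : Fin (k + 1) → ℂ → ℂ)
    (hf : ∀ t, DifferentiableOn ℂ (f t) U)
    (hind : LinearIndependent ℂ (fun t => U.restrict (f t)))
    (hcz : ∀ z ∈ U, ∃ t, f t z ≠ 0)
    (a : Fin q → (Fin (k + 1) → ℂ)) (ha : ∀ j, a j ≠ 0)
    (hgen : ∀ B : Finset (Fin q), B.card = n + 1 →
      Submodule.span ℂ (a '' ↑B) = ⊤)
    (ϖ : Fin q → ℝ) (hϖ : ∀ j, 0 < ϖ j ∧ ϖ j ≤ 1)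
    (hN : ∀ B : Finset (Fin q), B.card ≤ n + 1 →
      ∑ j ∈ B, ϖ j ≤ (Module.finrank ℂ (Submodule.span ℂ (a '' ↑B)) : ℝ))
    (F : Fin q → ℂ → ℂ) (hF : ∀ j z, F j z = ∑ t, a j t * f t z)
    (W : ℂ → ℂ)
    (hW : ∀ z, W z
      = Matrix.det (Matrix.of fun s t : Fin (k + 1) => iteratedDeriv s.1 (f t) z)) :
    (∃ z ∈ U, W z ≠ 0) ∧ (∀ j, ∃ z ∈ U, F j z ≠ 0) ∧
    ∀ z₀ ∈ U,
      ∑ j, ϖ j * max (((ordAt (F j) z₀).toNat : ℝ) - k) 0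
        ≤ ((ordAt W z₀).toNat : ℝ) := by
  classical
  obtain ⟨hUne, hUpre⟩ := hUconn
  have hfa : ∀ t, AnalyticOnNhd ℂ (f t) U := fun t => (hf t).analyticOnNhd hUopen
  have hFfun : ∀ j, F j = fun z => ∑ t, a j t * f t z := fun j => funext (hF j)
  have hFa : ∀ j, AnalyticOnNhd ℂ (F j) U := by
    intro j z hz
    rw [hFfun j]
    exact Finset.analyticAt_fun_sum _ fun t _ => analyticAt_const.mul (hfa t z hz)
  have hWa : AnalyticOnNhd ℂ W U := by
    intro z hz
    rw [funext hW]
    exact (ordGe_det (fun s t => fun z => iteratedDeriv s.1 (f t) z) (fun _ => 0)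
      (fun s t => ordGe_of_analyticAt (((hfa t).iteratedDeriv' hUopen s.1) z hz))).analyticAt
  have part1 : ∃ z ∈ U, W z ≠ 0 := by
    by_contra hcon
    push_neg at hcon
    obtain ⟨c, hc0, hrel⟩ := wronskian_aux k U hUopen hUpre f hfa (fun z hz => by
      rw [← hW z]; exact hcon z hz)
    apply hc0
    funext t
    refine Fintype.linearIndependent_iff.mp hind c ?_ t
    funext x
    have := hrel x.1 x.2
    simpa [Finset.sum_apply, Set.restrict] using this
  have part2 : ∀ j, ∃ z ∈ U, F j z ≠ 0 := by
    intro j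
    by_contra hcon
    push_neg at hcon
    apply ha j
    funext t
    refine Fintype.linearIndependent_iff.mp hind (a j) ?_ t
    funext x
    have := hcon x.1 x.2
    rw [hF j x.1] at this
    simpa [Finset.sum_apply, Set.restrict] using this
  refine ⟨part1, part2, ?_⟩
  intro z₀ hz₀
  have hWz : AnalyticAt ℂ W z₀ := hWa z₀ hz₀
  have hWfin : analyticOrderAt W z₀ ≠ ⊤ := by
    intro htop
    obtain ⟨zw, hzwU, hzw⟩ := part1
    exact hzw (hWa.eqOn_zero_of_preconnected_of_eventuallyEq_zero hUpre hz₀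
      ((analyticOrderAt_eq_top.mp htop).mono fun z hz => hz) hzwU)
  set N : ℕ := (analyticOrderAt W z₀).toNat with hNdef
  have hNo : analyticOrderAt W z₀ = (N : ℕ∞) := (ENat.coe_toNat hWfin).symm
  have hFz : ∀ j, AnalyticAt ℂ (F j) z₀ := fun j => hFa j z₀ hz₀
  have hFfin : ∀ j, analyticOrderAt (F j) z₀ ≠ ⊤ := by
    intro j htop
    obtain ⟨zf, hzfU, hzf⟩ := part2 j
    exact hzf ((hFa j).eqOn_zero_of_preconnected_of_eventuallyEq_zero hUpre hz₀
      ((analyticOrderAt_eq_top.mp htop).mono fun z hz => hz) hzfU)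
  set e : Fin q → ℕ := fun j => (analyticOrderAt (F j) z₀).toNat with hedef
  have heo : ∀ j, analyticOrderAt (F j) z₀ = ((e j : ℕ) : ℕ∞) := fun j => (ENat.coe_toNat (hFfin j)).symm
  set m : Fin q → ℕ := fun j => e j - k with hmdef
  have hgoalL : ∀ j, ϖ j * max (((ordAt (F j) z₀).toNat : ℝ) - k) 0 = ϖ j * (m j : ℝ) := by
    intro j
    congr 1
    have h1 : ordAt (F j) z₀ = analyticOrderAt (F j) z₀ := by
      simp only [ordAt]
      rw [dif_pos (hFz j)]
    rw [h1, heo j]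
    simp only [ENat.toNat_coe]
    show max ((e j : ℝ) - k) 0 = ((e j - k : ℕ) : ℝ)
    rcases le_or_gt (e j) k with h | h
    · rw [max_eq_right, Nat.sub_eq_zero_of_le h]
      · simp
      · rw [sub_nonpos]
        exact_mod_cast h
    · rw [max_eq_left, Nat.cast_sub (le_of_lt h)]
      rw [sub_nonneg]
      exact_mod_cast le_of_lt h
  have hgoalR : ((ordAt W z₀).toNat : ℝ) = (N : ℝ) := by
    have : ordAt W z₀ = analyticOrderAt W z₀ := by
      simp only [ordAt]
      rw [dif_pos hWz]
    rw [this]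
  rw [Finset.sum_congr rfl (fun j _ => hgoalL j), hgoalR]
  set B : Finset (Fin q) := Finset.univ.filter (fun j => 0 < m j) with hBdef
  have hsumB : ∑ j, ϖ j * (m j : ℝ) = ∑ j ∈ B, ϖ j * (m j : ℝ) := by
    refine (Finset.sum_subset (Finset.subset_univ B) fun j _ hj => ?_).symm
    have hm0 : m j = 0 := by
      simp only [hBdef, Finset.mem_filter, Finset.mem_univ, true_and, not_lt,
        Nat.le_zero] at hj
      exact hj
    rw [hm0]
    simp
  have hordF : ∀ j, ordGe (F j) z₀ (e j) := fun j => ordGe_of_order (hFz j) (heo j)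
  have hFvanish : ∀ j ∈ B, F j z₀ = 0 := by
    intro j hj
    obtain ⟨u, hu, hueq⟩ := hordF j
    rw [hueq.self_of_nhds, sub_self, zero_pow, zero_mul]
    have hmj : 0 < m j := by
      simpa [hBdef] using hj
    simp only [hmdef] at hmj
    omega
  have hcardB : B.card ≤ n := by
    by_contra hcon
    push_neg at hcon
    obtain ⟨B', hB'sub, hB'card⟩ := Finset.exists_subset_card_eq
      (show n+1 ≤ B.card by omega)
    have hspan := hgen B' hB'card
    obtain ⟨t0, ht0⟩ := hcz z₀ hz₀
    set ψ : (Fin (k+1) → ℂ) →ₗ[ℂ] ℂ := ∑ t, f t z₀ • LinearMap.proj t with hψdef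
    have hsub : a '' ↑B' ⊆ (LinearMap.ker ψ : Set (Fin (k+1) → ℂ)) := by
      rintro v ⟨j, hj, rfl⟩
      have hjB : j ∈ B := hB'sub (by exact_mod_cast hj)
      have hψa : ψ (a j) = F j z₀ := by
        rw [hψdef, hF j]
        simp only [LinearMap.sum_apply, LinearMap.smul_apply, LinearMap.proj_apply,
          smul_eq_mul]
        exact Finset.sum_congr rfl fun t _ => mul_comm _ _
      simp only [SetLike.mem_coe, LinearMap.mem_ker, hψa]
      exact hFvanish j hjB
    have hker := Submodule.span_le.mpr hsub
    rw [hspan] at hker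
    have hmem : Pi.single t0 (1:ℂ) ∈ LinearMap.ker ψ := hker Submodule.mem_top
    rw [LinearMap.mem_ker, hψdef] at hmem
    simp only [LinearMap.sum_apply, LinearMap.smul_apply, LinearMap.proj_apply,
      smul_eq_mul] at hmem
    rw [Finset.sum_eq_single t0 (fun t _ ht => by
        rw [Pi.single_apply, if_neg (by exact fun hh => ht (by rw [hh])), mul_zero])
      (fun ht => absurd (Finset.mem_univ t0) ht)] at hmem
    rw [Pi.single_apply, if_pos rfl, mul_one] at hmem
    exact ht0 hmem
  obtain ⟨T, hTB, hTinj, hTli, hTsum⟩ := nochka_comb (K := Fin (k+1) → ℂ) (a := a) ϖ m B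
    (fun B' hB' => hN B' (le_trans (Finset.card_le_card hB') (by omega)))
  obtain ⟨C, ι, hCdet, hιinj, hrow⟩ := exists_basis_matrix a T hTinj hTli
  set G : Fin (k+1) → ℂ → ℂ := fun i z => ∑ t, C i t * f t z with hGdef
  set c : Fin (k+1) → ℕ := fun i => ∑ j ∈ T.filter (fun j => ι j = i), m j with hcdef
  have hsumc : ∑ i, c i = ∑ j ∈ T, m j :=
    Finset.sum_fiberwise_of_maps_to (fun j _ => Finset.mem_univ (ι j)) m
  have hGF : ∀ j ∈ T, G (ι j) = F j := by
    intro j hj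
    funext z
    rw [hFfun j]
    show ∑ t, C (ι j) t * f t z = ∑ t, a j t * f t z
    refine Finset.sum_congr rfl fun t _ => ?_
    rw [← congrFun (hrow j hj) t]
  have hentry : ∀ (s : Fin (k+1)) (i : Fin (k+1)),
      ordGe (fun z => iteratedDeriv s.1 (G i) z) z₀ (c i) := by
    intro s i
    rcases Finset.eq_empty_or_nonempty (T.filter (fun j => ι j = i)) with hemp | ⟨j, hj⟩
    · have hc0 : c i = 0 := by rw [hcdef]; simp only; rw [hemp]; simp
      rw [hc0]
      refine ordGe_of_analyticAt ?_
      have hGa : AnalyticOnNhd ℂ (G i) U := fun z hz =>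
        Finset.analyticAt_fun_sum _ fun t _ => analyticAt_const.mul (hfa t z hz)
      exact (hGa.iteratedDeriv' hUopen s.1) z₀ hz₀
    · obtain ⟨hjT, hji⟩ := Finset.mem_filter.mp hj
      have hfil : T.filter (fun j' => ι j' = i) = {j} := by
        ext j'
        simp only [Finset.mem_filter, Finset.mem_singleton]
        constructor
        · rintro ⟨hj'T, hj'i⟩
          exact hιinj (by exact_mod_cast hj'T) (by exact_mod_cast hjT) (hj'i.trans hji.symm)
        · rintro rfl
          exact ⟨hjT, hji⟩
      have hci : c i = m j := by rw [hcdef]; simp only; rw [hfil, Finset.sum_singleton]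
      rw [hci, ← hji, hGF j hjT]
      refine ((hordF j).iteratedDeriv s.1).mono ?_
      have hsk : s.1 ≤ k := Nat.lt_succ_iff.mp s.2
      simp only [hmdef]
      omega
  have hdetG : ordGe (fun z => Matrix.det (Matrix.of fun s i : Fin (k+1) =>
      iteratedDeriv s.1 (G i) z)) z₀ (∑ i, c i) :=
    ordGe_det _ c hentry
  have hrel : ∀ z ∈ U, Matrix.det (Matrix.of fun s i : Fin (k+1) => iteratedDeriv s.1 (G i) z)
      = W z * C.transpose.det := by
    intro z hz
    have hM : (Matrix.of fun s i : Fin (k+1) => iteratedDeriv s.1 (G i) z)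
        = (Matrix.of fun s t : Fin (k+1) => iteratedDeriv s.1 (f t) z) * C.transpose := by
      ext s i
      rw [Matrix.mul_apply]
      simp only [Matrix.of_apply, Matrix.transpose_apply]
      rw [hGdef]
      rw [iteratedDeriv_comb hUopen f hfa (fun t => C i t) s.1 z hz]
      exact Finset.sum_congr rfl fun t _ => by ring
    rw [hM, Matrix.det_mul, hW z]
  have hCdt : C.transpose.det ≠ 0 := by rwa [Matrix.det_transpose]
  have hordW : ordGe W z₀ (∑ i, c i) := by
    refine ((hdetG.const_mul (C.transpose.det)⁻¹)).congr ?_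
    filter_upwards [hUopen.mem_nhds hz₀] with z hz
    rw [hrel z hz]
    field_simp
  have hfinal : (∑ i, c i) ≤ N := ordGe_le_order hWz hNo hordW
  calc ∑ j, ϖ j * (m j : ℝ) = ∑ j ∈ B, ϖ j * (m j : ℝ) := hsumB
    _ ≤ ∑ j ∈ T, (m j : ℝ) := hTsum
    _ = ((∑ j ∈ T, m j : ℕ) : ℝ) := by push_cast; rfl
    _ = ((∑ i, c i : ℕ) : ℝ) := by rw [hsumc]
    _ ≤ (N : ℝ) := by exact_mod_cast hfinal
end

section
/- Ahlfors–Schwarz-type lemma: Let 0 < R < ∞ and let Ω : ℂ → ℝ be positive and of class C² on the disc Δ_R = {z : |z| < R}. Suppose there is a constant c > 0 such that Δ(log Ω)(z) ≥ c·Ω(z) for all z ∈ Δ_R, where Δ = ∂²/∂s² + ∂²/∂t² is the Laplacian in z = s + it (i.e. the curvature of the pseudo-metric (i/2π)·Ω dz∧dz̄ is bounded above by a negative constant). Then there exists a constant C > 0 such that Ω(z) ≤ C·(2R/(R² − |z|²))² for all z ∈ Δ_R. -/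
open Filter Metric Set Topology

private lemma contDiffOn_open_of_contDiffAt {f : ℝ → ℝ} {x : ℝ} (hf : ContDiffAt ℝ 2 f x) :
    ∃ t : Set ℝ, IsOpen t ∧ x ∈ t ∧ ContDiffOn ℝ 2 f t := by
  obtain ⟨u, hu, hfu⟩ := hf.contDiffOn le_rfl (by simp)
  obtain ⟨t, hts, ht, hxt⟩ := _root_.mem_nhds_iff.mp hu
  exact ⟨t, ht, hxt, hfu.mono hts⟩

private lemma differentiableAt_deriv_of_contDiffAt {f : ℝ → ℝ} {x : ℝ}
    (hf : ContDiffAt ℝ 2 f x) : DifferentiableAt ℝ (deriv f) x := by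
  obtain ⟨t, ht, hxt, hft⟩ := contDiffOn_open_of_contDiffAt hf
  have h2 : ContDiffOn ℝ ((1:ℕ) + 1) f t := by exact_mod_cast hft
  have hdf : ContDiffOn ℝ 1 (deriv f) t :=
    ((contDiffOn_succ_iff_deriv_of_isOpen ht).mp (by exact_mod_cast h2)).2.2
  exact ((hdf.differentiableOn one_ne_zero) x hxt).differentiableAt (ht.mem_nhds hxt)

private lemma second_deriv_nonpos_of_isLocalMax {f : ℝ → ℝ} {x : ℝ}
    (hf : ContDiffAt ℝ 2 f x) (hmax : IsLocalMax f x) :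
    deriv (deriv f) x ≤ 0 := by
  by_contra hcon
  push_neg at hcon
  obtain ⟨t, ht, hxt, hft⟩ := contDiffOn_open_of_contDiffAt hf
  have hdiff : DifferentiableOn ℝ f t := hft.differentiableOn (by norm_num)
  have hd0 : deriv f x = 0 := hmax.deriv_eq_zero
  have hder : HasDerivAt (deriv f) (deriv (deriv f) x) x :=
    (differentiableAt_deriv_of_contDiffAt hf).hasDerivAt
  have hslope := hasDerivAt_iff_tendsto_slope.mp hder
  have hpos : ∀ᶠ y in 𝓝[>] x, 0 < deriv f y := by
    have h1 : ∀ᶠ y in 𝓝[≠] x, 0 < slope (deriv f) x y :=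
      hslope.eventually (eventually_gt_nhds hcon)
    have h2 : ∀ᶠ y in 𝓝[>] x, 0 < slope (deriv f) x y :=
      h1.filter_mono (nhdsWithin_mono x fun y hy => ne_of_gt hy)
    filter_upwards [h2, self_mem_nhdsWithin] with y hy hy'
    have hxy : (0:ℝ) < y - x := sub_pos.mpr hy'
    rw [slope_def_field, hd0, sub_zero] at hy
    rcases div_pos_iff.mp hy with h | h
    · exact h.1
    · linarith [h.2]
  obtain ⟨ε, hε, hball⟩ := Metric.isOpen_iff.mp ht x hxt
  have hIoo : ∀ᶠ y in 𝓝[>] x, y < x + ε :=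
    eventually_of_mem (Ioo_mem_nhdsGT_of_mem ⟨le_refl x, by linarith⟩) fun y hy => hy.2
  have hm : ∀ᶠ y in 𝓝[>] x, f y ≤ f x := hmax.filter_mono nhdsWithin_le_nhds
  have hall : ∀ᶠ y in 𝓝[>] x, 0 < deriv f y ∧ y < x + ε ∧ f y ≤ f x :=
    hpos.and (hIoo.and hm)
  obtain ⟨u, hu, hsub⟩ := mem_nhdsGT_iff_exists_Ioo_subset.mp hall
  set y := (x + u) / 2 with hy_def
  have hxy : x < y := by simp only [hy_def]; linarith [mem_Ioi.mp hu]
  have hyu : y < u := by simp only [hy_def]; linarith [mem_Ioi.mp hu]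
  have hyP : 0 < deriv f y ∧ y < x + ε ∧ f y ≤ f x := hsub ⟨hxy, hyu⟩
  have hIcc : Icc x y ⊆ t := by
    intro w hw
    apply hball
    rw [Metric.mem_ball, Real.dist_eq, abs_of_nonneg (by linarith [hw.1])]
    linarith [hw.2, hyP.2.1]
  have hmono : StrictMonoOn f (Icc x y) := by
    apply strictMonoOn_of_deriv_pos (convex_Icc x y) (hdiff.continuousOn.mono hIcc)
    intro w hw
    rw [interior_Icc] at hw
    exact (hsub ⟨hw.1, hw.2.trans hyu⟩).1
  have : f x < f y := hmono (left_mem_Icc.mpr hxy.le) (right_mem_Icc.mpr hxy.le) hxy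
  linarith [hyP.2.2]

private lemma deriv_deriv_add {f g : ℝ → ℝ} {x : ℝ}
    (hf : ContDiffAt ℝ 2 f x) (hg : ContDiffAt ℝ 2 g x) :
    deriv (deriv (fun y => f y + g y)) x = deriv (deriv f) x + deriv (deriv g) x := by
  have hev : (fun y => deriv (fun z => f z + g z) y) =ᶠ[𝓝 x]
      (fun y => deriv f y + deriv g y) := by
    filter_upwards [hf.eventually (by simp), hg.eventually (by simp)] with y hfy hgy
    exact deriv_add (hfy.differentiableAt (by norm_num)) (hgy.differentiableAt (by norm_num))
  rw [Filter.EventuallyEq.deriv_eq hev]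
  exact deriv_add (differentiableAt_deriv_of_contDiffAt hf)
    (differentiableAt_deriv_of_contDiffAt hg)

private lemma log_quad_contDiffAt (b x : ℝ) (hb : x ^ 2 < b) :
    ContDiffAt ℝ 2 (fun s : ℝ => 2 * Real.log (b - s ^ 2)) x := by
  have h0 : b - x ^ 2 ≠ 0 := by nlinarith
  exact contDiffAt_const.mul
    (((contDiff_const.sub (contDiff_id.pow 2)).contDiffAt).log h0)

private lemma log_quad_deriv2 (b x : ℝ) (hb : x ^ 2 < b) :
    deriv (deriv (fun s : ℝ => 2 * Real.log (b - s ^ 2))) x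
      = -4 * (b + x ^ 2) / (b - x ^ 2) ^ 2 := by
  have ht : IsOpen {s : ℝ | s ^ 2 < b} := isOpen_lt (by continuity) continuous_const
  have hev : (fun s => deriv (fun u : ℝ => 2 * Real.log (b - u ^ 2)) s) =ᶠ[𝓝 x]
      (fun s => 2 * (-(2 * s) / (b - s ^ 2))) := by
    filter_upwards [ht.mem_nhds hb] with s hs
    have hne : b - s ^ 2 ≠ 0 := by nlinarith [hs]
    have hq : HasDerivAt (fun u : ℝ => b - u ^ 2) (-(2 * s)) s := by
      simpa using (hasDerivAt_pow 2 s).const_sub b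
    exact ((hq.log hne).const_mul 2).deriv
  rw [Filter.EventuallyEq.deriv_eq hev]
  have hne : b - x ^ 2 ≠ 0 := by nlinarith
  have hnum : HasDerivAt (fun s : ℝ => -(2 * s)) (-2) x := by
    simpa using ((hasDerivAt_id x).const_mul (-2:ℝ))
  have hden : HasDerivAt (fun s : ℝ => b - s ^ 2) (-(2 * x)) x := by
    simpa using (hasDerivAt_pow 2 x).const_sub b
  have hdiv := (hnum.fun_div hden hne).const_mul (2:ℝ)
  rw [hdiv.deriv]
  field_simp
  ring

private lemma axis_estimate (R r : ℝ) (hrR : r < R) (Ω : ℂ → ℝ)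
    (hpos : ∀ z ∈ Metric.ball (0:ℂ) R, 0 < Ω z)
    (hC2 : ContDiffOn ℝ 2 Ω (Metric.ball (0:ℂ) R))
    (line : ℝ → ℂ) (hlineC2 : ContDiff ℝ 2 line)
    (k : ℝ) (hk : ∀ s, Complex.normSq (line s) = s ^ 2 + k)
    (x₀ : ℝ) (z₀ : ℂ) (hline0 : line x₀ = z₀) (hz₀ : z₀ ∈ Metric.ball (0:ℂ) r)
    (hlog : IsLocalMax (fun z => Real.log (Ω z * (r ^ 2 - Complex.normSq z) ^ 2)) z₀) :
    iteratedDeriv 2 (fun s => Real.log (Ω (line s))) x₀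
      ≤ 4 * ((r ^ 2 - k) + x₀ ^ 2) / (r ^ 2 - Complex.normSq z₀) ^ 2 := by
  have hsub : Metric.ball (0:ℂ) r ⊆ Metric.ball (0:ℂ) R := ball_subset_ball hrR.le
  have hnz₀ : Complex.normSq z₀ < r ^ 2 := by
    have h1 : ‖z₀‖ < r := by simpa [Complex.dist_eq] using hz₀
    have h2 := norm_nonneg z₀
    rw [Complex.normSq_eq_norm_sq]; nlinarith
  have hnz₀' : Complex.normSq z₀ = x₀ ^ 2 + k := by rw [← hline0, hk]
  have hx₀b : x₀ ^ 2 < r ^ 2 - k := by linarith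
  set b := r ^ 2 - k with hb_def
  set f : ℝ → ℝ := fun s => Real.log (Ω (line s)) with hf_def
  set g : ℝ → ℝ := fun s => 2 * Real.log (b - s ^ 2) with hg_def
  -- eventual equality near x₀
  have hmem : ∀ᶠ s in 𝓝 x₀, line s ∈ Metric.ball (0:ℂ) r :=
    (hlineC2.continuous.tendsto x₀).eventually
      ((hline0 ▸ Metric.isOpen_ball.eventually_mem (hline0 ▸ hz₀)))
  have heq : (fun s => Real.log (Ω (line s) * (r ^ 2 - Complex.normSq (line s)) ^ 2))
      =ᶠ[𝓝 x₀] fun s => f s + g s := by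
    filter_upwards [hmem] with s hs
    have hΩpos : 0 < Ω (line s) := hpos _ (hsub hs)
    have hns : Complex.normSq (line s) < r ^ 2 := by
      have h1 : ‖line s‖ < r := by simpa [Complex.dist_eq] using hs
      have h2 := norm_nonneg (line s)
      rw [Complex.normSq_eq_norm_sq]; nlinarith
    have hbs : r ^ 2 - Complex.normSq (line s) = b - s ^ 2 := by rw [hk]; ring
    have hbs' : (0:ℝ) < b - s ^ 2 := by rw [← hbs]; linarith
    rw [hbs, Real.log_mul hΩpos.ne' (by positivity), Real.log_pow]
    push_cast
    ring
  have hcomp : IsLocalMax (fun s =>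
      Real.log (Ω (line s) * (r ^ 2 - Complex.normSq (line s)) ^ 2)) x₀ := by
    have hlog' : IsLocalMax (fun z => Real.log (Ω z * (r ^ 2 - Complex.normSq z) ^ 2))
        (line x₀) := by rwa [hline0]
    exact hlog'.comp_tendsto (hlineC2.continuous.tendsto x₀)
  have hFmax : IsLocalMax (fun s => f s + g s) x₀ := by
    show ∀ᶠ s in 𝓝 x₀, f s + g s ≤ f x₀ + g x₀
    have hval := heq.self_of_nhds
    filter_upwards [hcomp, heq] with s h1 h2
    rw [← h2]
    exact h1.trans_eq hval
  have hΩlineC2 : ContDiffAt ℝ 2 f x₀ := by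
    have h1 : ContDiffAt ℝ 2 Ω (line x₀) :=
      hC2.contDiffAt (Metric.isOpen_ball.mem_nhds (by rw [hline0]; exact hsub hz₀))
    have h2 : ContDiffAt ℝ 2 (fun s => Ω (line s)) x₀ := h1.comp x₀ hlineC2.contDiffAt
    exact h2.log (ne_of_gt (by rw [hline0]; exact hpos _ (hsub hz₀)))
  have hgC2 : ContDiffAt ℝ 2 g x₀ := log_quad_contDiffAt b x₀ hx₀b
  have hd := second_deriv_nonpos_of_isLocalMax (hΩlineC2.add hgC2) hFmax
  rw [deriv_deriv_add hΩlineC2 hgC2, log_quad_deriv2 b x₀ hx₀b] at hd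
  have h2iter : iteratedDeriv 2 f x₀ = deriv (deriv f) x₀ := by
    rw [show (2:ℕ) = 1 + 1 from rfl, iteratedDeriv_succ, iteratedDeriv_one]
  have hDeq : b - x₀ ^ 2 = r ^ 2 - Complex.normSq z₀ := by rw [hnz₀']; ring
  rw [h2iter, ← hDeq]
  have hbpos : (0:ℝ) < b - x₀ ^ 2 := by linarith
  have : -4 * (b + x₀ ^ 2) / (b - x₀ ^ 2) ^ 2 = -(4 * (b + x₀ ^ 2) / (b - x₀ ^ 2) ^ 2) := by
    ring
  rw [this] at hd
  have hgoal : (4:ℝ) * (b + x₀ ^ 2) / (b - x₀ ^ 2) ^ 2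
      = 4 * ((r ^ 2 - k) + x₀ ^ 2) / (b - x₀ ^ 2) ^ 2 := by rw [hb_def]
  linarith [hd, hgoal ▸ (le_refl ((4:ℝ) * (b + x₀ ^ 2) / (b - x₀ ^ 2) ^ 2))]

private lemma key_disc (R : ℝ) (Ω : ℂ → ℝ)
    (hpos : ∀ z ∈ Metric.ball (0:ℂ) R, 0 < Ω z)
    (hC2 : ContDiffOn ℝ 2 Ω (Metric.ball (0:ℂ) R))
    (c : ℝ) (hc : 0 < c)
    (hcurv : ∀ z ∈ Metric.ball (0:ℂ) R,
      c * Ω z ≤ iteratedDeriv 2 (fun s : ℝ =>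
          Real.log (Ω ((s : ℂ) + (z.im : ℂ) * Complex.I))) z.re +
        iteratedDeriv 2 (fun t : ℝ =>
          Real.log (Ω ((z.re : ℂ) + (t : ℂ) * Complex.I))) z.im)
    (r : ℝ) (hr : 0 < r) (hrR : r < R) :
    ∀ z ∈ Metric.ball (0:ℂ) r, Ω z * (r ^ 2 - Complex.normSq z) ^ 2 ≤ 8 * r ^ 2 / c := by
  have hsub' : Metric.closedBall (0:ℂ) r ⊆ Metric.ball (0:ℂ) R := closedBall_subset_ball hrR
  set v : ℂ → ℝ := fun z => Ω z * (r ^ 2 - Complex.normSq z) ^ 2 with hv_def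
  have hcontv : ContinuousOn v (Metric.closedBall (0:ℂ) r) :=
    (hC2.continuousOn.mono hsub').mul (Continuous.continuousOn (by continuity))
  obtain ⟨z₀, hz₀mem, hmaxOn⟩ := (isCompact_closedBall (0:ℂ) r).exists_isMaxOn
    ⟨0, Metric.mem_closedBall_self hr.le⟩ hcontv
  have hball_pos : ∀ z ∈ Metric.ball (0:ℂ) r, 0 < v z := by
    intro z hz
    have h1 : ‖z‖ < r := by simpa [Complex.dist_eq] using hz
    have h2 := norm_nonneg z
    have h3 : Complex.normSq z < r ^ 2 := by rw [Complex.normSq_eq_norm_sq]; nlinarith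
    have h4 : 0 < Ω z := hpos z (Metric.ball_subset_ball hrR.le hz)
    have : (0:ℝ) < r ^ 2 - Complex.normSq z := by linarith
    positivity
  have hvz₀pos : 0 < v z₀ :=
    lt_of_lt_of_le (hball_pos 0 (Metric.mem_ball_self hr)) (hmaxOn (Metric.mem_closedBall_self hr.le))
  have hz₀ball : z₀ ∈ Metric.ball (0:ℂ) r := by
    rcases lt_or_eq_of_le (Metric.mem_closedBall.mp hz₀mem) with h | h
    · exact Metric.mem_ball.mpr h
    · exfalso
      have h1 : ‖z₀‖ = r := by rwa [Complex.dist_eq, sub_zero] at h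
      have h2 : Complex.normSq z₀ = r ^ 2 := by rw [Complex.normSq_eq_norm_sq, h1]
      rw [hv_def] at hvz₀pos
      simp only [h2, sub_self] at hvz₀pos
      norm_num at hvz₀pos
  have hlocmax : IsLocalMax v z₀ :=
    hmaxOn.isLocalMax (_root_.mem_nhds_iff.mpr
      ⟨Metric.ball 0 r, Metric.ball_subset_closedBall, Metric.isOpen_ball, hz₀ball⟩)
  have hlog : IsLocalMax (fun z => Real.log (v z)) z₀ := by
    show ∀ᶠ z in 𝓝 z₀, Real.log (v z) ≤ Real.log (v z₀)
    filter_upwards [hlocmax, Metric.isOpen_ball.eventually_mem hz₀ball] with z h1 h2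
    exact Real.log_le_log (hball_pos z h2) h1
  -- horizontal line
  have hlineC2₁ : ContDiff ℝ 2 (fun s : ℝ => (s : ℂ) + (z₀.im : ℂ) * Complex.I) :=
    Complex.ofRealCLM.contDiff.add contDiff_const
  have hH := axis_estimate R r hrR Ω hpos hC2 _ hlineC2₁ (z₀.im ^ 2)
    (fun s => Complex.normSq_add_mul_I s z₀.im) z₀.re z₀ (Complex.re_add_im z₀) hz₀ball hlog
  -- vertical line
  have hlineC2₂ : ContDiff ℝ 2 (fun t : ℝ => (z₀.re : ℂ) + (t : ℂ) * Complex.I) :=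
    contDiff_const.add (Complex.ofRealCLM.contDiff.mul contDiff_const)
  have hV := axis_estimate R r hrR Ω hpos hC2 _ hlineC2₂ (z₀.re ^ 2)
    (fun t => by rw [Complex.normSq_add_mul_I]; ring) z₀.im z₀ (Complex.re_add_im z₀)
    hz₀ball hlog
  set D := r ^ 2 - Complex.normSq z₀ with hD_def
  have hDpos : 0 < D := by
    have h1 : ‖z₀‖ < r := by simpa [Complex.dist_eq] using hz₀ball
    have h2 := norm_nonneg z₀
    rw [hD_def, Complex.normSq_eq_norm_sq]; nlinarith
  have hcz₀ := hcurv z₀ (hsub' hz₀mem)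
  have hsum : c * Ω z₀ ≤ 8 * r ^ 2 / D ^ 2 := by
    have h1 : c * Ω z₀ ≤ 4 * ((r ^ 2 - z₀.im ^ 2) + z₀.re ^ 2) / D ^ 2
        + 4 * ((r ^ 2 - z₀.re ^ 2) + z₀.im ^ 2) / D ^ 2 :=
      hcz₀.trans (add_le_add hH hV)
    have h2 : 4 * ((r ^ 2 - z₀.im ^ 2) + z₀.re ^ 2) / D ^ 2
        + 4 * ((r ^ 2 - z₀.re ^ 2) + z₀.im ^ 2) / D ^ 2 = 8 * r ^ 2 / D ^ 2 := by
      rw [← add_div]; congr 1; ring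
    linarith [h2 ▸ h1]
  have hbound : Ω z₀ * D ^ 2 ≤ 8 * r ^ 2 / c := by
    have h1 : c * Ω z₀ * D ^ 2 ≤ 8 * r ^ 2 := by
      rw [← le_div_iff₀ (by positivity : (0:ℝ) < D ^ 2)]; exact hsum
    rw [le_div_iff₀ hc]
    nlinarith [h1]
  intro z hz
  exact (hmaxOn (Metric.ball_subset_closedBall hz)).trans hbound


/-- The Laplacian `Δ = ∂²/∂s² + ∂²/∂t²` of a function `f : ℂ → ℝ` in the
coordinate `z = s + it`. -/
noncomputable def laplacian (f : ℂ → ℝ) (z : ℂ) : ℝ :=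
  iteratedDeriv 2 (fun s : ℝ => f ((s : ℂ) + (z.im : ℂ) * Complex.I)) z.re +
  iteratedDeriv 2 (fun t : ℝ => f ((z.re : ℂ) + (t : ℂ) * Complex.I)) z.im

/-- Ahlfors–Schwarz-type lemma: if `Ω > 0` is `C²` on the disc `Δ_R` and
`Δ(log Ω) ≥ c·Ω` there for some `c > 0` (curvature of the pseudo-metric
`(i/2π)Ω dz∧dz̄` bounded above by a negative constant), then there is `C > 0`
with `Ω(z) ≤ C·(2R/(R² − |z|²))²` on `Δ_R`. -/
theorem ahlfors_schwarz (R : ℝ) (hR : 0 < R) (Ω : ℂ → ℝ)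
    (hpos : ∀ z ∈ Metric.ball (0 : ℂ) R, 0 < Ω z)
    (hC2 : ContDiffOn ℝ 2 Ω (Metric.ball (0 : ℂ) R))
    (c : ℝ) (hc : 0 < c)
    (hcurv : ∀ z ∈ Metric.ball (0 : ℂ) R,
      c * Ω z ≤ laplacian (fun w => Real.log (Ω w)) z) :
    ∃ C > 0, ∀ z ∈ Metric.ball (0 : ℂ) R,
      Ω z ≤ C * (2 * R / (R ^ 2 - ‖z‖ ^ 2)) ^ 2 := by
  refine ⟨2 / c, by positivity, ?_⟩
  intro z hz
  have ha : ‖z‖ < R := by simpa [Complex.dist_eq] using hz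
  have ha0 := norm_nonneg z
  have hkey : ∀ r ∈ Ioo (‖z‖) R,
      Ω z ≤ 2 / c * (2 * r / (r ^ 2 - ‖z‖ ^ 2)) ^ 2 := by
    intro r hr
    have hr0 : 0 < r := lt_of_le_of_lt ha0 hr.1
    have h := key_disc R Ω hpos hC2 c hc
      (fun w hw => by simpa [laplacian] using hcurv w hw) r hr0 hr.2 z
      (by simpa [Complex.dist_eq] using hr.1)
    have hD : 0 < r ^ 2 - ‖z‖ ^ 2 := by nlinarith [hr.1]
    rw [← Complex.sq_norm] at h
    have heq : 2 / c * (2 * r / (r ^ 2 - ‖z‖ ^ 2)) ^ 2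
        = (8 * r ^ 2 / c) / ((r ^ 2 - ‖z‖ ^ 2) ^ 2) := by
      field_simp; ring
    rw [heq, le_div_iff₀ (by positivity)]
    exact h
  have htend : Tendsto (fun r => 2 / c * (2 * r / (r ^ 2 - ‖z‖ ^ 2)) ^ 2)
      (𝓝[<] R) (𝓝 (2 / c * (2 * R / (R ^ 2 - ‖z‖ ^ 2)) ^ 2)) := by
    have hden : R ^ 2 - ‖z‖ ^ 2 ≠ 0 := by nlinarith
    have hcont : ContinuousAt (fun r => 2 / c * (2 * r / (r ^ 2 - ‖z‖ ^ 2)) ^ 2) R :=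
      continuousAt_const.mul
        (((continuousAt_const.mul continuousAt_id).div
          ((continuousAt_id.pow 2).sub continuousAt_const) hden).pow 2)
    exact hcont.tendsto.mono_left nhdsWithin_le_nhds
  refine ge_of_tendsto htend ?_
  filter_upwards [Ioo_mem_nhdsLT_of_mem (⟨ha, le_refl R⟩ : R ∈ Ioc (‖z‖) R)] with r hr
  exact hkey r hr
end

section
/- Let U, V ⊆ ℂ be open sets, g : U → V holomorphic, and f₀, …, f_k : V → ℂ holomorphic. Define the Wronskian W(h₀, …, h_k) = det((d/dz)^s h_t)_{0≤s,t≤k}. Then for every z ∈ U, W(f₀∘g, …, f_k∘g)(z) = W(f₀, …, f_k)(g(z)) · (g'(z))^{k(k+1)/2}. (This change-of-variable formula for Wronskians, W_z = W_w·(dw/dz)^{k(k+1)/2}, is used to transfer the auxiliary metric along the local isometry in the proof of the modified defect relation.) -/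
/-- The Wronskian `W(h₀, …, h_k) = det((d/dz)^s h_t)_{0≤s,t≤k}` of `k+1`
functions `ℂ → ℂ`. -/
noncomputable def wronskian (k : ℕ) (f : Fin (k + 1) → ℂ → ℂ) (z : ℂ) : ℂ :=
  Matrix.det (Matrix.of fun s t : Fin (k + 1) => iteratedDeriv s.1 (f t) z)

/-- Coefficients in the Faà-di-Bruno-type expansion of `iteratedDeriv s (f ∘ g)`. -/
noncomputable def wcoef (g : ℂ → ℂ) : ℕ → ℕ → ℂ → ℂ
  | 0, 0 => fun _ => 1
  | 0, _ + 1 => fun _ => 0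
  | s + 1, 0 => deriv (wcoef g s 0)
  | s + 1, j + 1 => deriv (wcoef g s (j + 1)) + wcoef g s j * deriv g

lemma wcoef_eq_zero (g : ℂ → ℂ) : ∀ s j, s < j → wcoef g s j = fun _ => 0 := by
  intro s
  induction s with
  | zero => intro j hj; match j, hj with | (j+1), _ => rfl
  | succ s ih =>
      intro j hj
      match j, hj with
      | (j+1), hj =>
        show deriv (wcoef g s (j + 1)) + wcoef g s j * deriv g = fun _ => 0
        have h1 : wcoef g s (j+1) = fun _ => 0 := ih _ ((by omega : s < j + 1))
        have h2 : wcoef g s j = fun _ => 0 := ih _ ((by omega : s < j))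
        rw [h1, h2]
        funext w
        simp [deriv_const]

lemma wcoef_diffOn {U : Set ℂ} (hU : IsOpen U) {g : ℂ → ℂ}
    (hg : DifferentiableOn ℂ g U) :
    ∀ s j, DifferentiableOn ℂ (wcoef g s j) U := by
  have hder : ∀ c : ℂ → ℂ, DifferentiableOn ℂ c U → DifferentiableOn ℂ (deriv c) U :=
    fun c hc => ((hc.analyticOnNhd hU).deriv).differentiableOn
  intro s
  induction s with
  | zero =>
      intro j
      match j with
      | 0 => exact differentiableOn_const 1
      | (j+1) => exact differentiableOn_const 0
  | succ s ih =>
      intro j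
      match j with
      | 0 => exact hder _ (ih 0)
      | (j+1) => exact (hder _ (ih (j+1))).add ((ih j).mul (hder _ hg))

lemma wcoef_diag {U : Set ℂ} (hU : IsOpen U) {g : ℂ → ℂ}
    (hg : DifferentiableOn ℂ g U) :
    ∀ s, ∀ z ∈ U, wcoef g s s z = (deriv g z) ^ s := by
  intro s
  induction s with
  | zero => intro z _; simp [wcoef]
  | succ s ih =>
      intro z hz
      show deriv (wcoef g s (s + 1)) z + wcoef g s s z * deriv g z = _
      have h1 : wcoef g s (s+1) = fun _ => 0 := wcoef_eq_zero g s (s+1) (Nat.lt_succ_self s)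
      rw [h1, ih z hz]
      simp [pow_succ]

lemma iteratedDeriv_comp_expand {U V : Set ℂ} (hU : IsOpen U) (hV : IsOpen V)
    {g : ℂ → ℂ} (hg : DifferentiableOn ℂ g U) (hmap : Set.MapsTo g U V)
    (s : ℕ) :
    ∀ (f : ℂ → ℂ), DifferentiableOn ℂ f V → ∀ z ∈ U,
      iteratedDeriv s (f ∘ g) z
        = ∑ j ∈ Finset.range (s + 1), wcoef g s j z * iteratedDeriv j f (g z) := by
  induction s with
  | zero =>
      intro f hf z hz
      simp [wcoef]
  | succ s ih =>
      intro f hf z hz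
      have hfa : AnalyticOnNhd ℂ f V := hf.analyticOnNhd hV
      have hit : ∀ j, DifferentiableOn ℂ (iteratedDeriv j f) V :=
        fun j => by rw [iteratedDeriv_eq_iterate]; exact (hfa.iterated_deriv j).differentiableOn
      have hcoefAt : ∀ s' j, DifferentiableAt ℂ (wcoef g s' j) z :=
        fun s' j => (wcoef_diffOn hU hg s' j).differentiableAt (hU.mem_nhds hz)
      have hgAt : DifferentiableAt ℂ g z := hg.differentiableAt (hU.mem_nhds hz)
      have hitAt : ∀ j, DifferentiableAt ℂ (iteratedDeriv j f) (g z) :=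
        fun j => (hit j).differentiableAt (hV.mem_nhds (hmap hz))
      have hcompAt : ∀ j, DifferentiableAt ℂ (fun w => iteratedDeriv j f (g w)) z :=
        fun j => (hitAt j).comp z hgAt
      -- locally, iteratedDeriv s (f ∘ g) equals the expansion
      have heq : iteratedDeriv s (f ∘ g) =ᶠ[nhds z]
          fun w => ∑ j ∈ Finset.range (s + 1), wcoef g s j w * iteratedDeriv j f (g w) := by
        filter_upwards [hU.mem_nhds hz] with w hw
        exact ih f hf w hw
      rw [iteratedDeriv_succ, heq.deriv_eq]
      rw [deriv_fun_sum (A := fun j w => wcoef g s j w * iteratedDeriv j f (g w)) (fun j _ => ((hcoefAt s j).mul (hcompAt j)))]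
      have hterm : ∀ j ∈ Finset.range (s + 1),
          deriv (fun w => wcoef g s j w * iteratedDeriv j f (g w)) z
            = deriv (wcoef g s j) z * iteratedDeriv j f (g z)
              + wcoef g s j z * (deriv g z * iteratedDeriv (j + 1) f (g z)) := by
        intro j _
        rw [deriv_fun_mul (hcoefAt s j) (hcompAt j)]
        have : deriv (fun w => iteratedDeriv j f (g w)) z
            = deriv (iteratedDeriv j f) (g z) * deriv g z :=
          deriv_comp z (hitAt j) hgAt
        rw [this, ← iteratedDeriv_succ]
        ring
      rw [Finset.sum_congr rfl hterm, Finset.sum_add_distrib]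
      have hzero : deriv (wcoef g s (s + 1)) z = 0 := by
        rw [wcoef_eq_zero g s (s + 1) (Nat.lt_succ_self s)]
        simp
      have hsplit : ∑ j ∈ Finset.range (s + 2), wcoef g (s + 1) j z * iteratedDeriv j f (g z)
          = (∑ j ∈ Finset.range (s + 1),
              (deriv (wcoef g s (j + 1)) z + wcoef g s j z * deriv g z)
                * iteratedDeriv (j + 1) f (g z))
            + deriv (wcoef g s 0) z * iteratedDeriv 0 f (g z) := by
        rw [Finset.sum_range_succ']
        rfl
      rw [hsplit]
      have e2 : ∀ j ∈ Finset.range (s + 1),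
          (deriv (wcoef g s (j + 1)) z + wcoef g s j z * deriv g z)
              * iteratedDeriv (j + 1) f (g z)
            = deriv (wcoef g s (j + 1)) z * iteratedDeriv (j + 1) f (g z)
              + wcoef g s j z * (deriv g z * iteratedDeriv (j + 1) f (g z)) := fun j _ => by ring
      rw [Finset.sum_congr rfl e2, Finset.sum_add_distrib]
      rw [Finset.sum_range_succ
        (fun j => deriv (wcoef g s (j + 1)) z * iteratedDeriv (j + 1) f (g z)) s, hzero]
      rw [Finset.sum_range_succ'
        (fun j => deriv (wcoef g s j) z * iteratedDeriv j f (g z)) s]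
      ring

/-- Change-of-variable formula for Wronskians: if `g : U → V` is holomorphic
and `f₀, …, f_k : V → ℂ` are holomorphic, then for every `z ∈ U`,
`W(f₀∘g, …, f_k∘g)(z) = W(f₀, …, f_k)(g(z)) · g'(z)^{k(k+1)/2}`. -/
theorem wronskian_comp (U V : Set ℂ) (hU : IsOpen U) (hV : IsOpen V)
    (g : ℂ → ℂ) (hg : DifferentiableOn ℂ g U) (hmap : Set.MapsTo g U V)
    (k : ℕ) (f : Fin (k + 1) → ℂ → ℂ)
    (hf : ∀ t, DifferentiableOn ℂ (f t) V) :
    ∀ z ∈ U,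
      wronskian k (fun t => f t ∘ g) z
        = wronskian k f (g z) * (deriv g z) ^ (k * (k + 1) / 2) := by
  intro z hz
  set L : Matrix (Fin (k + 1)) (Fin (k + 1)) ℂ :=
    Matrix.of fun s j : Fin (k + 1) => wcoef g s.1 j.1 z with hL
  set M : Matrix (Fin (k + 1)) (Fin (k + 1)) ℂ :=
    Matrix.of fun j t : Fin (k + 1) => iteratedDeriv j.1 (f t) (g z) with hM
  have hA : (Matrix.of fun s t : Fin (k + 1) =>
      iteratedDeriv s.1 ((fun t => f t ∘ g) t) z) = L * M := by
    ext s t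
    rw [Matrix.mul_apply]
    have expand := iteratedDeriv_comp_expand hU hV hg hmap s.1 (f t) (hf t) z hz
    simp only [Matrix.of_apply, hL, hM]
    rw [show (iteratedDeriv s.1 (f t ∘ g) z : ℂ)
        = ∑ j ∈ Finset.range (s.1 + 1), wcoef g s.1 j z * iteratedDeriv j (f t) (g z)
        from expand]
    rw [Fin.sum_univ_eq_sum_range (fun j => wcoef g s.1 j z * iteratedDeriv j (f t) (g z))]
    refine Finset.sum_subset ?_ ?_
    · intro j hj
      have h1 := Finset.mem_range.mp hj
      have h2 := s.2
      exact Finset.mem_range.mpr (by omega)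
    · intro j _ hj
      have hsj : s.1 < j := by
        by_contra h
        exact hj (Finset.mem_range.mpr (by omega))
      rw [wcoef_eq_zero g s.1 j hsj]
      simp
  have hLdet : L.det = (deriv g z) ^ (k * (k + 1) / 2) := by
    have htri : L.BlockTriangular OrderDual.toDual := by
      intro s j hsj
      have : s.1 < j.1 := hsj
      simp only [hL, Matrix.of_apply]
      rw [wcoef_eq_zero g s.1 j.1 this]
    rw [Matrix.det_of_lowerTriangular L htri]
    have hdiag : ∀ s : Fin (k + 1), L s s = (deriv g z) ^ s.1 := by
      intro s
      simp only [hL, Matrix.of_apply]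
      exact wcoef_diag hU hg s.1 z hz
    rw [Finset.prod_congr rfl (fun s _ => hdiag s)]
    rw [Finset.prod_pow_eq_pow_sum]
    congr 1
    rw [Fin.sum_univ_eq_sum_range (fun j => j), Finset.sum_range_id]
    simp [Nat.mul_comm]
  show Matrix.det _ = _
  rw [hA, Matrix.det_mul, hLdet]
  rw [mul_comm]
  rfl
end
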